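/- arXiv:2512.15656 — 10 statements merged into one kernel-verified Lean document; each statement's English description precedes it below -/
import Mathlib

section
/- Let α and β be finite nonempty index types, and let ψ : α × β → ℂ be a vector admitting a Schmidt form ψ(i,j) = ∑_{t} λ_t · s_t(i) · r_t(j), where λ : Fin m → ℝ with λ_t ≥ 0, and (s_t)_{t} and (r_t)_{t} are orthonormal families of vectors (with respect to the standard ℓ² inner product on α → ℂ and β → ℂ). Let Φ be the rank-one matrix Φ((i,j),(k,l)) = ψ(i,j) · conj(ψ(k,l)). Then for every t, the vector u_t defined by u_t(i,j) = s_t(i) · conj(r_t(j)) is an eigenvector of the partial transpose Φ^{T_B} with eigenvalue λ_t², i.e. Φ^{T_B} *ᵥ u_t = (λ_t² : ℂ) • u_t. -/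
open Matrix BigOperators

/-- Partial transpose on the second tensor factor. -/
def ptB {α β : Type*} (M : Matrix (α × β) (α × β) ℂ) : Matrix (α × β) (α × β) ℂ :=
  fun p q => M (p.1, q.2) (q.1, p.2)

theorem stmt0 {α β : Type*} [Fintype α] [Fintype β] [Nonempty α] [Nonempty β]
    (m : ℕ) (ψ : α × β → ℂ) (lam : Fin m → ℝ)
    (s : Fin m → α → ℂ) (r : Fin m → β → ℂ)
    (hlam : ∀ t, 0 ≤ lam t)
    (hs : ∀ t t', ∑ i, (starRingEnd ℂ) (s t i) * s t' i = if t = t' then 1 else 0)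
    (hr : ∀ t t', ∑ j, (starRingEnd ℂ) (r t j) * r t' j = if t = t' then 1 else 0)
    (hψ : ∀ i j, ψ (i, j) = ∑ t, (lam t : ℂ) * s t i * r t j)
    (Φ : Matrix (α × β) (α × β) ℂ)
    (hΦ : ∀ p q, Φ p q = ψ p * (starRingEnd ℂ) (ψ q))
    (t : Fin m) :
    ptB Φ *ᵥ (fun p => s t p.1 * (starRingEnd ℂ) (r t p.2))
      = ((lam t : ℂ) ^ 2) • (fun p => s t p.1 * (starRingEnd ℂ) (r t p.2)) := by
  funext p
  obtain ⟨i, j⟩ := p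
  have hA : ∑ l, ψ (i, l) * (starRingEnd ℂ) (r t l) = (lam t : ℂ) * s t i := by
    simp only [hψ, Finset.sum_mul]
    rw [Finset.sum_comm]
    have : ∀ t' : Fin m, ∑ l, (lam t' : ℂ) * s t' i * r t' l * (starRingEnd ℂ) (r t l)
        = (lam t' : ℂ) * s t' i * (if t = t' then 1 else 0) := by
      intro t'
      rw [← hr t t', Finset.mul_sum]
      exact Finset.sum_congr rfl fun l _ => by ring
    simp only [this]
    simp [Finset.sum_ite_eq, mul_comm]
  have hB : ∑ k, (starRingEnd ℂ) (ψ (k, j)) * s t k = (lam t : ℂ) * (starRingEnd ℂ) (r t j) := by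
    simp only [hψ, map_sum, _root_.map_mul, Finset.sum_mul]
    rw [Finset.sum_comm]
    have : ∀ t' : Fin m, ∑ k, (starRingEnd ℂ) ((lam t' : ℂ)) * (starRingEnd ℂ) (s t' k) *
          (starRingEnd ℂ) (r t' j) * s t k
        = (starRingEnd ℂ) ((lam t' : ℂ)) * (starRingEnd ℂ) (r t' j) *
          (if t' = t then 1 else 0) := by
      intro t'
      rw [← hs t' t, Finset.mul_sum]
      exact Finset.sum_congr rfl fun k _ => by ring
    simp only [this]
    simp [Finset.sum_ite_eq', Complex.conj_ofReal, mul_comm]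
  have expand : (ptB Φ *ᵥ (fun p => s t p.1 * (starRingEnd ℂ) (r t p.2))) (i, j)
      = (∑ l, ψ (i, l) * (starRingEnd ℂ) (r t l)) * (∑ k, (starRingEnd ℂ) (ψ (k, j)) * s t k) := by
    simp only [mulVec, dotProduct, ptB, hΦ, Fintype.sum_prod_type, Finset.sum_mul,
      Finset.mul_sum]
    exact Finset.sum_congr rfl fun k _ => Finset.sum_congr rfl fun l _ => by ring
  rw [expand, hA, hB]
  simp only [Pi.smul_apply, smul_eq_mul]
  ring
end

section
/- Let α and β be finite nonempty index types, and let ψ : α × β → ℂ be a vector admitting a Schmidt form ψ(i,j) = ∑_{t} λ_t · s_t(i) · r_t(j), where λ : Fin m → ℝ with λ_t ≥ 0, and (s_t)_{t} and (r_t)_{t} are orthonormal families of vectors. Let Φ be the rank-one matrix Φ((i,j),(k,l)) = ψ(i,j) · conj(ψ(k,l)). Then for every pair t ≠ t', the two vectors Ψ±(i,j) = (s_t(i)·conj(r_{t'}(j)) ± s_{t'}(i)·conj(r_t(j)))/√2 are eigenvectors of the partial transpose Φ^{T_B} with eigenvalues +λ_t·λ_{t'} and −λ_t·λ_{t'} respectively,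 i.e. Φ^{T_B} *ᵥ Ψ± = (±λ_t λ_{t'} : ℂ) • Ψ±. -/
open Matrix BigOperators

theorem stmt1 {α β : Type*} [Fintype α] [Fintype β] [Nonempty α] [Nonempty β]
    (m : ℕ) (ψ : α × β → ℂ) (lam : Fin m → ℝ)
    (s : Fin m → α → ℂ) (r : Fin m → β → ℂ)
    (hlam : ∀ t, 0 ≤ lam t)
    (hs : ∀ t t', ∑ i, (starRingEnd ℂ) (s t i) * s t' i = if t = t' then 1 else 0)
    (hr : ∀ t t', ∑ j, (starRingEnd ℂ) (r t j) * r t' j = if t = t' then 1 else 0)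
    (hψ : ∀ i j, ψ (i, j) = ∑ t, (lam t : ℂ) * s t i * r t j)
    (Φ : Matrix (α × β) (α × β) ℂ)
    (hΦ : ∀ p q, Φ p q = ψ p * (starRingEnd ℂ) (ψ q))
    (t t' : Fin m) (hne : t ≠ t') :
    (ptB Φ *ᵥ (fun p => (s t p.1 * (starRingEnd ℂ) (r t' p.2)
          + s t' p.1 * (starRingEnd ℂ) (r t p.2)) / (Real.sqrt 2 : ℂ))
        = ((lam t : ℂ) * (lam t' : ℂ)) •
          (fun p => (s t p.1 * (starRingEnd ℂ) (r t' p.2)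
            + s t' p.1 * (starRingEnd ℂ) (r t p.2)) / (Real.sqrt 2 : ℂ)))
    ∧
    (ptB Φ *ᵥ (fun p => (s t p.1 * (starRingEnd ℂ) (r t' p.2)
          - s t' p.1 * (starRingEnd ℂ) (r t p.2)) / (Real.sqrt 2 : ℂ))
        = (-((lam t : ℂ) * (lam t' : ℂ))) •
          (fun p => (s t p.1 * (starRingEnd ℂ) (r t' p.2)
            - s t' p.1 * (starRingEnd ℂ) (r t p.2)) / (Real.sqrt 2 : ℂ))) := by
  have horthr : ∀ a d : Fin m, ∑ l, r a l * (starRingEnd ℂ) (r d l)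
      = if a = d then 1 else 0 := by
    intro a d
    have h := congrArg (starRingEnd ℂ) (hr a d)
    simpa [map_sum, apply_ite, mul_comm] using h
  have key1 : ∀ (i : α) (d : Fin m),
      ∑ l, ψ (i, l) * (starRingEnd ℂ) (r d l) = (lam d : ℂ) * s d i := by
    intro i d
    calc ∑ l, ψ (i, l) * (starRingEnd ℂ) (r d l)
        = ∑ l, ∑ a, (lam a : ℂ) * s a i * (r a l * (starRingEnd ℂ) (r d l)) := by
          simp [hψ, Finset.sum_mul, mul_assoc]
      _ = ∑ a, (lam a : ℂ) * s a i * ∑ l, r a l * (starRingEnd ℂ) (r d l) := by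
          rw [Finset.sum_comm]; simp [Finset.mul_sum]
      _ = (lam d : ℂ) * s d i := by simp [horthr]
  have key2 : ∀ (j : β) (c : Fin m),
      ∑ k, (starRingEnd ℂ) (ψ (k, j)) * s c k = (lam c : ℂ) * (starRingEnd ℂ) (r c j) := by
    intro j c
    calc ∑ k, (starRingEnd ℂ) (ψ (k, j)) * s c k
        = ∑ k, ∑ b, (lam b : ℂ) * (starRingEnd ℂ) (r b j) * ((starRingEnd ℂ) (s b k) * s c k) := by
          simp only [hψ, map_sum, _root_.map_mul, Finset.sum_mul]
          refine Finset.sum_congr rfl fun k _ => Finset.sum_congr rfl fun b _ => ?_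
          simp [Complex.conj_ofReal]; ring
      _ = ∑ b, (lam b : ℂ) * (starRingEnd ℂ) (r b j) * ∑ k, (starRingEnd ℂ) (s b k) * s c k := by
          rw [Finset.sum_comm]; simp [Finset.mul_sum]
      _ = (lam c : ℂ) * (starRingEnd ℂ) (r c j) := by simp [hs]
  have main : ∀ (i : α) (j : β) (c d : Fin m),
      ∑ q : α × β, ψ (i, q.2) * (starRingEnd ℂ) (ψ (q.1, j)) * (s c q.1 * (starRingEnd ℂ) (r d q.2))
        = (lam c : ℂ) * (lam d : ℂ) * (s d i * (starRingEnd ℂ) (r c j)) := by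
    intro i j c d
    rw [Fintype.sum_prod_type]
    have hterm : ∀ (k : α) (l : β),
        ψ (i, l) * (starRingEnd ℂ) (ψ (k, j)) * (s c k * (starRingEnd ℂ) (r d l))
          = ((starRingEnd ℂ) (ψ (k, j)) * s c k) * (ψ (i, l) * (starRingEnd ℂ) (r d l)) := by
      intro k l; ring
    simp_rw [hterm, ← Finset.mul_sum, ← Finset.sum_mul, key1, key2]
    ring
  constructor
  · funext p
    obtain ⟨i, j⟩ := p
    show ∑ q : α × β, Φ (i, q.2) (q.1, j) *
        ((s t q.1 * (starRingEnd ℂ) (r t' q.2) + s t' q.1 * (starRingEnd ℂ) (r t q.2)) / (Real.sqrt 2 : ℂ)) = _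
    have hexp : ∀ q : α × β, Φ (i, q.2) (q.1, j) *
        ((s t q.1 * (starRingEnd ℂ) (r t' q.2) + s t' q.1 * (starRingEnd ℂ) (r t q.2)) / (Real.sqrt 2 : ℂ))
        = (ψ (i, q.2) * (starRingEnd ℂ) (ψ (q.1, j)) * (s t q.1 * (starRingEnd ℂ) (r t' q.2))
          + ψ (i, q.2) * (starRingEnd ℂ) (ψ (q.1, j)) * (s t' q.1 * (starRingEnd ℂ) (r t q.2))) / (Real.sqrt 2 : ℂ) := by
      intro q; rw [hΦ]; ring
    simp_rw [hexp, ← Finset.sum_div, Finset.sum_add_distrib, main]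
    show _ = ((lam t : ℂ) * (lam t' : ℂ)) *
        ((s t i * (starRingEnd ℂ) (r t' j) + s t' i * (starRingEnd ℂ) (r t j)) / (Real.sqrt 2 : ℂ))
    ring
  · funext p
    obtain ⟨i, j⟩ := p
    show ∑ q : α × β, Φ (i, q.2) (q.1, j) *
        ((s t q.1 * (starRingEnd ℂ) (r t' q.2) - s t' q.1 * (starRingEnd ℂ) (r t q.2)) / (Real.sqrt 2 : ℂ)) = _
    have hexp : ∀ q : α × β, Φ (i, q.2) (q.1, j) *
        ((s t q.1 * (starRingEnd ℂ) (r t' q.2) - s t' q.1 * (starRingEnd ℂ) (r t q.2)) / (Real.sqrt 2 : ℂ))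
        = (ψ (i, q.2) * (starRingEnd ℂ) (ψ (q.1, j)) * (s t q.1 * (starRingEnd ℂ) (r t' q.2))
          - ψ (i, q.2) * (starRingEnd ℂ) (ψ (q.1, j)) * (s t' q.1 * (starRingEnd ℂ) (r t q.2))) / (Real.sqrt 2 : ℂ) := by
      intro q; rw [hΦ]; ring
    simp_rw [hexp, ← Finset.sum_div, Finset.sum_sub_distrib, main]
    show _ = (-((lam t : ℂ) * (lam t' : ℂ))) *
        ((s t i * (starRingEnd ℂ) (r t' j) - s t' i * (starRingEnd ℂ) (r t j)) / (Real.sqrt 2 : ℂ))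
    ring
end

section
/- Let α and β be finite nonempty index types and let ψ : α × β → ℂ be a unit vector (∑ |ψ(i,j)|² = 1). Let Φ be the rank-one projector Φ((i,j),(k,l)) = ψ(i,j) · conj(ψ(k,l)). Then the partial transpose Φ^{T_B} satisfies −(1/2)·1 ⪯ Φ^{T_B} ⪯ 1 in the Loewner order; that is, both matrices 1 − Φ^{T_B} and Φ^{T_B} + (1/2)·1 are positive semidefinite. -/
/-!
For `v : α × β → ℂ` put `y (j, l) = ∑ k, conj (ψ (k, j)) * v (k, l)`, i.e. `y = ∑ₖ ψ̄ₖ ⊗ vₖ`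
over the rows of `ψ` and `v`. The quadratic form of `ptB (ψ ψ*)` at `v` is `⟪F y, y⟫`, where `F`
swaps the two factors of `ℓ²(β × β)`, and by polarization it equals
`(‖y + F y‖² - ‖y - F y‖²) / 4`. For a single row, `‖a ⊗ b + b ⊗ a‖ ≤ 2 ‖a‖ ‖b‖`, and
`‖a ⊗ b - b ⊗ a‖² = 2 ‖a‖² ‖b‖² - 2 |⟪a, b⟫|² ≤ 2 ‖a‖² ‖b‖²`. The triangle inequality over the rows
and Cauchy–Schwarz then give `‖y + F y‖² ≤ 4 ‖ψ‖² ‖v‖²` and `‖y - F y‖² ≤ 2 ‖ψ‖² ‖v‖²`, hence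
`-‖ψ‖² / 2 ≤ ptB (ψ ψ*) ≤ ‖ψ‖²`.
-/

open Matrix BigOperators ComplexOrder

open WithLp

namespace Matrix

variable {n : Type*}

theorem IsHermitian.posSemidef_of_forall_re_nonneg [Fintype n] {A : Matrix n n ℂ}
    (hA : A.IsHermitian) (h : ∀ v, 0 ≤ RCLike.re (star v ⬝ᵥ (A *ᵥ v))) : A.PosSemidef :=
  posSemidef_iff_dotProduct_mulVec.2
    ⟨hA, fun v => RCLike.nonneg_iff.2 ⟨h v, hA.im_star_dotProduct_mulVec_self v⟩⟩

theorem isHermitian_real_smul_one [DecidableEq n] (c : ℝ) :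
    ((c : ℂ) • 1 : Matrix n n ℂ).IsHermitian :=
  isHermitian_one.smul (Complex.conj_ofReal c)

theorem re_star_dotProduct_real_smul_one_mulVec [Fintype n] [DecidableEq n] (c : ℝ)
    (v : n → ℂ) : RCLike.re (star v ⬝ᵥ (((c : ℂ) • 1 : Matrix n n ℂ) *ᵥ v)) = c * ‖toLp 2 v‖ ^ 2 := by
  rw [smul_mulVec, one_mulVec, dotProduct_smul, smul_eq_mul, RCLike.re_to_complex,
    Complex.re_ofReal_mul, dotProduct_comm, ← EuclideanSpace.inner_toLp_toLp,
    ← RCLike.re_to_complex, inner_self_eq_norm_sq]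

theorem conjTranspose_ptB {α β : Type*} (M : Matrix (α × β) (α × β) ℂ) : (ptB M)ᴴ = ptB Mᴴ :=
  rfl

theorem IsHermitian.ptB {α β : Type*} {M : Matrix (α × β) (α × β) ℂ} (hM : M.IsHermitian) :
    (ptB M).IsHermitian := by
  rw [IsHermitian, conjTranspose_ptB, hM]

end Matrix

namespace EuclideanSpace

variable {α ι κ : Type*} [Fintype α] [Fintype ι] [Fintype κ]

def outer (a : EuclideanSpace ℂ ι) (b : EuclideanSpace ℂ κ) : EuclideanSpace ℂ (ι × κ) :=
  toLp 2 fun p => a p.1 * b p.2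

theorem inner_outer (a c : EuclideanSpace ℂ ι) (b d : EuclideanSpace ℂ κ) :
    inner ℂ (outer a b) (outer c d) = inner ℂ a c * inner ℂ b d := by
  simp only [outer, PiLp.inner_apply, Fintype.sum_prod_type, Finset.sum_mul_sum]
  refine Finset.sum_congr rfl fun i _ => Finset.sum_congr rfl fun j _ => ?_
  simp only [RCLike.inner_apply, map_mul]
  ring

theorem norm_outer (a : EuclideanSpace ℂ ι) (b : EuclideanSpace ℂ κ) :
    ‖outer a b‖ = ‖a‖ * ‖b‖ := by
  have h := inner_outer a a b b
  simp only [inner_self_eq_norm_sq_to_K] at h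
  rw [← sq_eq_sq₀ (norm_nonneg _) (by positivity), mul_pow]
  exact_mod_cast h

variable (ι κ) in
noncomputable def swap : EuclideanSpace ℂ (ι × κ) ≃ₗᵢ[ℂ] EuclideanSpace ℂ (κ × ι) :=
  LinearIsometryEquiv.piLpCongrLeft 2 ℂ ℂ (Equiv.prodComm ι κ)

@[simp]
theorem swap_apply (x : EuclideanSpace ℂ (ι × κ)) (p : κ × ι) : swap ι κ x p = x p.swap :=
  rfl

theorem swap_outer (a : EuclideanSpace ℂ ι) (b : EuclideanSpace ℂ κ) :
    swap ι κ (outer a b) = outer b a := by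
  ext p
  simp [outer, mul_comm]

theorem norm_outer_add_swap_le (a b : EuclideanSpace ℂ ι) :
    ‖outer a b + outer b a‖ ≤ 2 * (‖a‖ * ‖b‖) := by
  have := norm_add_le (outer a b) (outer b a)
  rw [norm_outer, norm_outer] at this
  linarith

theorem norm_outer_sub_swap_sq_le (a b : EuclideanSpace ℂ ι) :
    ‖outer a b - outer b a‖ ^ 2 ≤ 2 * (‖a‖ * ‖b‖) ^ 2 := by
  have : 0 ≤ RCLike.re (inner ℂ (outer a b) (outer b a)) := by
    rw [inner_outer, ← inner_conj_symm b a, RCLike.mul_conj]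
    norm_cast
    positivity
  rw [@norm_sub_sq ℂ, norm_outer, norm_outer]
  linarith

theorem norm_outer_sub_swap_le (a b : EuclideanSpace ℂ ι) :
    ‖outer a b - outer b a‖ ≤ √2 * (‖a‖ * ‖b‖) := by
  rw [← Real.sqrt_sq (norm_nonneg _), ← Real.sqrt_sq (by positivity : 0 ≤ ‖a‖ * ‖b‖),
    ← Real.sqrt_mul zero_le_two]
  exact Real.sqrt_le_sqrt (norm_outer_sub_swap_sq_le a b)

theorem re_inner_swap_self (x : EuclideanSpace ℂ (ι × ι)) :
    RCLike.re (inner ℂ (swap ι ι x) x) = (‖x + swap ι ι x‖ ^ 2 - ‖x - swap ι ι x‖ ^ 2) / 4 := by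
  rw [re_inner_eq_norm_add_mul_self_sub_norm_sub_mul_self_div_four, add_comm, norm_sub_rev]
  ring

theorem re_inner_swap_sum_outer_mem_Icc (a b : α → EuclideanSpace ℂ ι) :
    let x := ∑ k, outer (a k) (b k)
    RCLike.re (inner ℂ (swap ι ι x) x) ∈
      Set.Icc (-(∑ k, ‖a k‖ * ‖b k‖) ^ 2 / 2) ((∑ k, ‖a k‖ * ‖b k‖) ^ 2) := by
  intro x
  have hsymm : ‖x + swap ι ι x‖ ≤ 2 * ∑ k, ‖a k‖ * ‖b k‖ := by
    simp only [x, map_sum, swap_outer, ← Finset.sum_add_distrib, Finset.mul_sum]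
    exact (norm_sum_le _ _).trans (Finset.sum_le_sum fun k _ => norm_outer_add_swap_le _ _)
  have hanti : ‖x - swap ι ι x‖ ≤ √2 * ∑ k, ‖a k‖ * ‖b k‖ := by
    simp only [x, map_sum, swap_outer, ← Finset.sum_sub_distrib, Finset.mul_sum]
    exact (norm_sum_le _ _).trans (Finset.sum_le_sum fun k _ => norm_outer_sub_swap_le _ _)
  have hS : 0 ≤ ∑ k, ‖a k‖ * ‖b k‖ := by positivity
  rw [re_inner_swap_self]
  constructor
  · have := pow_le_pow_left₀ (norm_nonneg _) hanti 2
    rw [mul_pow, Real.sq_sqrt zero_le_two] at this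
    nlinarith [sq_nonneg ‖x + swap ι ι x‖]
  · have := pow_le_pow_left₀ (norm_nonneg _) hsymm 2
    nlinarith [sq_nonneg ‖x - swap ι ι x‖]

end EuclideanSpace

section PartialTranspose

variable {α β : Type*} [Fintype α] [Fintype β]

open EuclideanSpace

theorem sum_norm_curry_sq (u : α × β → ℂ) :
    ∑ k, ‖toLp 2 (Function.curry u k)‖ ^ 2 = ‖toLp 2 u‖ ^ 2 := by
  simp only [PiLp.norm_sq_eq_of_L2, Fintype.sum_prod_type]
  rfl

theorem sum_norm_curry_mul_le (u w : α × β → ℂ) :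
    ∑ k, ‖toLp 2 (Function.curry u k)‖ * ‖toLp 2 (Function.curry w k)‖ ≤
      ‖toLp 2 u‖ * ‖toLp 2 w‖ := by
  have := Real.sum_mul_le_sqrt_mul_sqrt Finset.univ (fun k => ‖toLp 2 (Function.curry u k)‖)
    (fun k => ‖toLp 2 (Function.curry w k)‖)
  simpa only [sum_norm_curry_sq, Real.sqrt_sq (norm_nonneg _)] using this

theorem norm_toLp_star (u : α × β → ℂ) : ‖toLp 2 (star u)‖ = ‖toLp 2 u‖ := by
  simp [EuclideanSpace.norm_eq]

theorem star_dotProduct_ptB_mulVec (ψ v : α × β → ℂ) :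
    let x := ∑ k, outer (toLp 2 (Function.curry (star ψ) k)) (toLp 2 (Function.curry v k))
    star v ⬝ᵥ (ptB (vecMulVec ψ (star ψ)) *ᵥ v) = inner ℂ (swap β β x) x := by
  intro x
  simp only [x, PiLp.inner_apply, swap_apply, outer, Function.curry_apply, dotProduct, mulVec, ptB,
    vecMulVec_apply, Fintype.sum_prod_type, WithLp.ofLp_sum, Finset.sum_apply, RCLike.inner_apply,
    Pi.star_apply, map_sum, map_mul, Finset.mul_sum, Finset.sum_mul]
  refine Finset.sum_comm.trans (Finset.sum_congr rfl fun j _ => ?_)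
  rw [Finset.sum_comm, Finset.sum_congr rfl fun k _ => Finset.sum_comm, Finset.sum_comm]
  refine Finset.sum_congr rfl fun l _ => Finset.sum_comm.trans <| Finset.sum_congr rfl fun i _ =>
    Finset.sum_congr rfl fun k _ => ?_
  simp only [Prod.swap_prod_mk, RCLike.star_def, RCLike.conj_conj]
  ring

theorem re_star_dotProduct_ptB_mulVec_mem_Icc (ψ v : α × β → ℂ) :
    RCLike.re (star v ⬝ᵥ (ptB (vecMulVec ψ (star ψ)) *ᵥ v)) ∈
      Set.Icc (-(‖toLp 2 ψ‖ * ‖toLp 2 v‖) ^ 2 / 2) ((‖toLp 2 ψ‖ * ‖toLp 2 v‖) ^ 2) := by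
  obtain ⟨hlo, hhi⟩ := re_inner_swap_sum_outer_mem_Icc
    (fun k => toLp 2 (Function.curry (star ψ) k)) (fun k => toLp 2 (Function.curry v k))
  have hS := sum_norm_curry_mul_le (star ψ) v
  rw [norm_toLp_star] at hS
  have hsq := pow_le_pow_left₀ (by positivity) hS 2
  rw [star_dotProduct_ptB_mulVec]
  constructor <;> linarith

variable [DecidableEq α] [DecidableEq β]

theorem posSemidef_norm_sq_smul_one_sub_ptB (ψ : α × β → ℂ) :
    (((‖toLp 2 ψ‖ ^ 2 : ℝ) : ℂ) • 1 - ptB (vecMulVec ψ (star ψ))).PosSemidef := by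
  refine ((isHermitian_real_smul_one _).sub
    (posSemidef_vecMulVec_self_star ψ).isHermitian.ptB).posSemidef_of_forall_re_nonneg fun v => ?_
  rw [sub_mulVec, dotProduct_sub, map_sub, re_star_dotProduct_real_smul_one_mulVec]
  linarith [(re_star_dotProduct_ptB_mulVec_mem_Icc ψ v).2]

theorem posSemidef_ptB_add_half_norm_sq_smul_one (ψ : α × β → ℂ) :
    (ptB (vecMulVec ψ (star ψ)) + ((‖toLp 2 ψ‖ ^ 2 / 2 : ℝ) : ℂ) • 1).PosSemidef := by
  refine ((posSemidef_vecMulVec_self_star ψ).isHermitian.ptB.add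
    (isHermitian_real_smul_one _)).posSemidef_of_forall_re_nonneg fun v => ?_
  rw [add_mulVec, dotProduct_add, map_add, re_star_dotProduct_real_smul_one_mulVec]
  linarith [(re_star_dotProduct_ptB_mulVec_mem_Icc ψ v).1]

end PartialTranspose

theorem stmt2_general {α β : Type*} [Fintype α] [Fintype β] [DecidableEq α] [DecidableEq β]
    (ψ : α × β → ℂ) (hψ : ∑ p, Complex.normSq (ψ p) = 1)
    (Φ : Matrix (α × β) (α × β) ℂ)
    (hΦ : ∀ p q, Φ p q = ψ p * (starRingEnd ℂ) (ψ q)) :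
    (1 - ptB Φ).PosSemidef ∧ (ptB Φ + ((1 / 2 : ℝ) : ℂ) • 1).PosSemidef := by
  obtain rfl : Φ = vecMulVec ψ (star ψ) := Matrix.ext hΦ
  have hnorm : ‖toLp 2 ψ‖ ^ 2 = 1 := by
    simpa [PiLp.norm_sq_eq_of_L2, Complex.sq_norm] using hψ
  exact ⟨by simpa [hnorm] using posSemidef_norm_sq_smul_one_sub_ptB ψ,
    by simpa [hnorm] using posSemidef_ptB_add_half_norm_sq_smul_one ψ⟩

theorem stmt2 {α β : Type*} [Fintype α] [Fintype β] [DecidableEq α] [DecidableEq β]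
    [Nonempty α] [Nonempty β]
    (ψ : α × β → ℂ) (hψ : ∑ p, Complex.normSq (ψ p) = 1)
    (Φ : Matrix (α × β) (α × β) ℂ)
    (hΦ : ∀ p q, Φ p q = ψ p * (starRingEnd ℂ) (ψ q)) :
    (1 - ptB Φ).PosSemidef ∧ (ptB Φ + ((1 / 2 : ℝ) : ℂ) • 1).PosSemidef :=
  stmt2_general ψ hψ Φ hΦ
end

section
/- Let α and β be finite nonempty index types and let ρ : Matrix (α × β) (α × β) ℂ be a density matrix. Suppose the partial transpose ρ^{T_B} has eigenvalue 1, i.e. there exists a unit vector v : α × β → ℂ with ρ^{T_B} *ᵥ v = v. Then ρ is a pure product state: there exist unit vectors a : α → ℂ and b : β → ℂ such that ρ((i,j),(k,l)) = a(i)·b(j)·conj(a(k))·conj(b(l)) for all entries. -/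
open Matrix BigOperators ComplexOrder

/-!
Since `|ρ p q|² ≤ ρ p p * ρ q q`, a density matrix has Frobenius norm at most `1`, and the
partial transpose preserves the Frobenius norm. A matrix of Frobenius norm `≤ 1` fixing a unit
vector `v` must be the projection `v v*`, so `ρ` is the partial transpose of the pure state
`v v*`. Positivity of that matrix forces every `2 × 2` minor of `v`, read as an `α × β` matrix,
to vanish: on the corresponding `4 × 4` principal submatrix, a test vector built from the
adjugate of the minor has expectation `-2 |det|²`. Hence `v = a ⊗ b`, and `ρ` is the pure
product state of `a` and `conj b`.
-/

open Complex ComplexConjugate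

namespace Matrix

lemma PosSemidef.normSq_apply_le {n : Type*} {ρ : Matrix n n ℂ} (hρ : ρ.PosSemidef) (p q : n) :
    normSq (ρ p q) ≤ (ρ p p).re * (ρ q q).re := by
  classical
  have h := (hρ.submatrix ![p, q]).det_nonneg
  rw [det_fin_two] at h
  simp only [submatrix_apply, cons_val_zero, cons_val_one] at h
  rw [← hρ.1.apply q p, ← hρ.1.coe_re_apply_self p, ← hρ.1.coe_re_apply_self q,
    RCLike.star_def, mul_conj, Complex.le_def] at h
  simpa using h.1

variable {n : Type*} [Fintype n]

lemma PosSemidef.sum_normSq_apply_le {ρ : Matrix n n ℂ} (hρ : ρ.PosSemidef) :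
    ∑ p, ∑ q, normSq (ρ p q) ≤ ρ.trace.re ^ 2 := by
  calc ∑ p, ∑ q, normSq (ρ p q) ≤ ∑ p, ∑ q, (ρ p p).re * (ρ q q).re :=
        Finset.sum_le_sum fun p _ => Finset.sum_le_sum fun q _ => hρ.normSq_apply_le p q
    _ = ρ.trace.re ^ 2 := by rw [← Finset.sum_mul_sum, trace, re_sum, sq]; rfl

lemma sum_normSq_sub_vecMulVec (M : Matrix n n ℂ) (v : n → ℂ) :
    ∑ p, ∑ q, normSq ((M - vecMulVec v (star v)) p q)
      = ∑ p, ∑ q, normSq (M p q) - 2 * (star v ⬝ᵥ M *ᵥ v).re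
        + (∑ p, normSq (v p)) ^ 2 := by
  have hcross :
      (star v ⬝ᵥ M *ᵥ v).re = ∑ p, ∑ q, (M p q * conj (v p * star (v q))).re := by
    simp only [dotProduct, mulVec, Finset.mul_sum, re_sum, Pi.star_apply, RCLike.star_def,
      map_mul, conj_conj]
    refine Finset.sum_congr rfl fun p _ => Finset.sum_congr rfl fun q _ => ?_
    congr 1
    ring
  rw [sq, Finset.sum_mul_sum, hcross]
  simp only [sub_apply, vecMulVec_apply, normSq_sub, Finset.sum_sub_distrib,
    Finset.sum_add_distrib, Finset.mul_sum, normSq_mul, Pi.star_apply, RCLike.star_def,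
    normSq_conj]
  ring

lemma eq_vecMulVec_of_mulVec_eq_self {M : Matrix n n ℂ} {v : n → ℂ}
    (hM : ∑ p, ∑ q, normSq (M p q) ≤ 1) (hv : ∑ p, normSq (v p) = 1) (hMv : M *ᵥ v = v) :
    M = vecMulVec v (star v) := by
  have hquad : (star v ⬝ᵥ M *ᵥ v).re = 1 := by
    rw [hMv, dotProduct_comm, dotProduct, re_sum]
    simpa [mul_conj] using hv
  have hsum : ∑ p, ∑ q, normSq ((M - vecMulVec v (star v)) p q) = 0 := by
    refine le_antisymm ?_
      (Finset.sum_nonneg fun p _ => Finset.sum_nonneg fun q _ => normSq_nonneg _)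
    rw [sum_normSq_sub_vecMulVec, hquad, hv]
    linarith
  ext p q
  have hrow := (Finset.sum_eq_zero_iff_of_nonneg fun p _ =>
    Finset.sum_nonneg fun q _ => normSq_nonneg _).mp hsum p (Finset.mem_univ p)
  have hentry := (Finset.sum_eq_zero_iff_of_nonneg fun q _ => normSq_nonneg _).mp hrow q
    (Finset.mem_univ q)
  exact sub_eq_zero.mp (normSq_eq_zero.mp hentry)

end Matrix

section PartialTranspose

variable {α β : Type*}

@[simp]
lemma ptB_ptB (M : Matrix (α × β) (α × β) ℂ) : ptB (ptB M) = M := rfl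

lemma sum_normSq_ptB [Fintype α] [Fintype β] (M : Matrix (α × β) (α × β) ℂ) :
    ∑ p, ∑ q, normSq (ptB M p q) = ∑ p, ∑ q, normSq (M p q) := by
  let e : (α × β) × (α × β) ≃ (α × β) × (α × β) :=
    { toFun x := ((x.1.1, x.2.2), (x.2.1, x.1.2))
      invFun x := ((x.1.1, x.2.2), (x.2.1, x.1.2))
      left_inv _ := rfl
      right_inv _ := rfl }
  simp only [← Fintype.sum_prod_type']
  exact e.sum_comp fun x => normSq (M x.1 x.2)

lemma mul_eq_mul_of_posSemidef_ptB_vecMulVec_fin_two (w : Fin 2 × Fin 2 → ℂ)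
    (h : (ptB (vecMulVec w (star w))).PosSemidef) :
    w (0, 0) * w (1, 1) = w (0, 1) * w (1, 0) := by
  set a := w (0, 0)
  set b := w (0, 1)
  set c := w (1, 0)
  set d := w (1, 1)
  -- As a matrix, `conj x` is `(J * adjugate !![a, b; c, d])ᵀ` with `J = !![0, 1; -1, 0]`.
  let x : Fin 2 × Fin 2 → ℂ := fun p => ![![-conj c, -conj d], ![conj a, conj b]] p.1 p.2
  have hx :
      star x ⬝ᵥ ptB (vecMulVec w (star w)) *ᵥ x = -2 * (normSq (a * d - b * c) : ℂ) := by
    simp only [dotProduct, mulVec, Fintype.sum_prod_type, Fin.sum_univ_two, ptB,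
      vecMulVec_apply, x, Pi.star_apply, RCLike.star_def, cons_val_zero, cons_val_one, map_neg,
      conj_conj]
    rw [normSq_eq_conj_mul_self]
    simp only [map_sub, map_mul]
    ring
  have hnonneg := h.dotProduct_mulVec_nonneg x
  rw [hx, ← ofReal_ofNat, ← ofReal_neg, ← ofReal_mul, zero_le_real] at hnonneg
  have hdet : normSq (a * d - b * c) = 0 := le_antisymm (by linarith) (normSq_nonneg _)
  exact sub_eq_zero.mp (normSq_eq_zero.mp hdet)

lemma mul_eq_mul_of_posSemidef_ptB_vecMulVec {v : α × β → ℂ}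
    (h : (ptB (vecMulVec v (star v))).PosSemidef) (i k : α) (j l : β) :
    v (i, j) * v (k, l) = v (i, l) * v (k, j) :=
  mul_eq_mul_of_posSemidef_ptB_vecMulVec_fin_two (v ∘ Prod.map ![i, k] ![j, l])
    (h.submatrix (Prod.map ![i, k] ![j, l]))

end PartialTranspose

section ProductVectors

variable {α β : Type*}

lemma exists_eq_mul_of_mul_eq_mul {v : α × β → ℂ} (hv : v ≠ 0)
    (h : ∀ i k j l, v (i, j) * v (k, l) = v (i, l) * v (k, j)) :
    ∃ (a : α → ℂ) (b : β → ℂ), ∀ i j, v (i, j) = a i * b j := by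
  obtain ⟨⟨i₀, j₀⟩, h₀⟩ := Function.ne_iff.mp hv
  refine ⟨fun i => v (i, j₀), fun j => v (i₀, j) / v (i₀, j₀), fun i j => ?_⟩
  rw [← mul_div_assoc, eq_div_iff h₀]
  exact h i i₀ j j₀

variable [Fintype α] [Fintype β]

lemma exists_normalized_of_eq_mul {v : α × β → ℂ} (hv : ∑ p, normSq (v p) = 1)
    {a : α → ℂ} {b : β → ℂ} (hab : ∀ i j, v (i, j) = a i * b j) :
    ∃ (a : α → ℂ) (b : β → ℂ),
      ∑ i, normSq (a i) = 1 ∧ ∑ j, normSq (b j) = 1 ∧ ∀ i j, v (i, j) = a i * b j := by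
  have hprod : (∑ i, normSq (a i)) * ∑ j, normSq (b j) = 1 := by
    simp only [← hv, Finset.sum_mul_sum, Fintype.sum_prod_type, hab, normSq_mul]
  set s := ∑ i, normSq (a i)
  have hs : 0 < s := lt_of_le_of_ne (Finset.sum_nonneg fun i _ => normSq_nonneg _)
    (by rintro h; simp [← h] at hprod)
  set r := Real.sqrt s
  have hr : r ≠ 0 := (Real.sqrt_pos.mpr hs).ne'
  have hr2 : r * r = s := Real.mul_self_sqrt hs.le
  refine ⟨fun i => a i / r, fun j => r * b j, ?_, ?_, fun i j => ?_⟩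
  · simp only [map_div₀, normSq_ofReal, ← Finset.sum_div, hr2]
    exact div_self hs.ne'
  · simp only [normSq_mul, normSq_ofReal, ← Finset.mul_sum, hr2, hprod]
  · rw [hab]
    field_simp [ofReal_ne_zero.mpr hr]

lemma exists_normalized_of_posSemidef_ptB_vecMulVec {v : α × β → ℂ}
    (hv : ∑ p, normSq (v p) = 1) (h : (ptB (vecMulVec v (star v))).PosSemidef) :
    ∃ (a : α → ℂ) (b : β → ℂ),
      ∑ i, normSq (a i) = 1 ∧ ∑ j, normSq (b j) = 1 ∧ ∀ i j, v (i, j) = a i * b j := by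
  have hv0 : v ≠ 0 := by rintro rfl; simp at hv
  obtain ⟨a, b, hab⟩ :=
    exists_eq_mul_of_mul_eq_mul hv0 (mul_eq_mul_of_posSemidef_ptB_vecMulVec h)
  exact exists_normalized_of_eq_mul hv hab

end ProductVectors

theorem stmt4_general {α β : Type*} [Fintype α] [Fintype β]
    (ρ : Matrix (α × β) (α × β) ℂ) (hρ : ρ.PosSemidef) (htr : ρ.trace = 1)
    (v : α × β → ℂ) (hv : ∑ p, Complex.normSq (v p) = 1)
    (hev : ptB ρ *ᵥ v = v) :
    ∃ (a : α → ℂ) (b : β → ℂ),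
      (∑ i, Complex.normSq (a i) = 1) ∧ (∑ j, Complex.normSq (b j) = 1) ∧
      ∀ i j k l, ρ (i, j) (k, l)
        = a i * b j * (starRingEnd ℂ) (a k) * (starRingEnd ℂ) (b l) := by
  have hfrob : ∑ p, ∑ q, normSq (ptB ρ p q) ≤ 1 := by
    simpa [sum_normSq_ptB, htr] using hρ.sum_normSq_apply_le
  have hρ_eq : ρ = ptB (vecMulVec v (star v)) := by
    rw [← eq_vecMulVec_of_mulVec_eq_self hfrob hv hev, ptB_ptB]
  obtain ⟨a, b, ha, hb, hab⟩ :=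
    exists_normalized_of_posSemidef_ptB_vecMulVec hv (hρ_eq ▸ hρ)
  refine ⟨a, star b, ha, by simpa using hb, fun i j k l => ?_⟩
  rw [hρ_eq]
  simp only [ptB, vecMulVec_apply, hab, Pi.star_apply, RCLike.star_def, map_mul, conj_conj]
  ring

theorem stmt4 {α β : Type*} [Fintype α] [Fintype β] [Nonempty α] [Nonempty β]
    (ρ : Matrix (α × β) (α × β) ℂ) (hρ : ρ.PosSemidef) (htr : ρ.trace = 1)
    (v : α × β → ℂ) (hv : ∑ p, Complex.normSq (v p) = 1)
    (hev : ptB ρ *ᵥ v = v) :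
    ∃ (a : α → ℂ) (b : β → ℂ),
      (∑ i, Complex.normSq (a i) = 1) ∧ (∑ j, Complex.normSq (b j) = 1) ∧
      ∀ i j k l, ρ (i, j) (k, l)
        = a i * b j * (starRingEnd ℂ) (a k) * (starRingEnd ℂ) (b l) :=
  stmt4_general ρ hρ htr v hv hev
end

section
/- Fix N ≥ 2 and local dimensions d : Fin N → ℕ with d i ≥ 1, and let V = Π (i : Fin N), Fin (d i). For k : Fin N → Bool, define the partial transpose M^{T_k} of M : Matrix V V ℂ over the subset {i | k i = true} by M^{T_k}(v,w) = M(v',w') where v' i = (if k i then w i else v i) and w' i = (if k i then v i else w i). Say ψ : V → ℂ is product across k (for k not constantly false and not constantly true) if there exist functions a : ({i // k i = true} → ℂ-indexed tuples) → ℂ and b on the complementary coordinates with ψ(v) = a(v restricted to {i | k i = true}) · b(v restricted to {i | k i = false}) for all v. Suppose ψ is a unit vector that is genuinely multipartite entangled, i.e. for every k : Fin N → Bool with k ≠ (fun _ => false) and k ≠ (fun _ => true), ψ is not product across k. Suppose ϱ : (Fin N → Bool) → Matrix V V ℂ is a family of positive semidefinite matrices such that the rank-one projector Ψ(v,w) =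 ψ(v)·conj(ψ(w)) satisfies Ψ = ∑_{k} (ϱ k)^{T_k}. Then ϱ k = 0 for every k with k ≠ (fun _ => false) and k ≠ (fun _ => true); moreover there exists p ∈ [0,1] with ϱ (fun _ => false) = p • Ψ and ϱ (fun _ => true) = (1 − p) • Ψᵀ. -/
open Matrix BigOperators ComplexOrder

/-- Partial transpose of a multipartite matrix over the subset of parties where `k` is `true`. -/
def ptK {N : ℕ} {d : Fin N → ℕ} (k : Fin N → Bool)
    (M : Matrix (∀ i, Fin (d i)) (∀ i, Fin (d i)) ℂ) :
    Matrix (∀ i, Fin (d i)) (∀ i, Fin (d i)) ℂ :=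
  fun v w => M (fun i => if k i then w i else v i) (fun i => if k i then v i else w i)

/-- `ψ` is product across the bipartition `{i | k i = true} | {i | k i = false}`. -/
def ProductAcross {N : ℕ} {d : Fin N → ℕ} (k : Fin N → Bool)
    (ψ : (∀ i, Fin (d i)) → ℂ) : Prop :=
  ∃ (a : (∀ i : {i : Fin N // k i = true}, Fin (d i.1)) → ℂ)
    (b : (∀ i : {i : Fin N // k i = false}, Fin (d i.1)) → ℂ),
    ∀ v, ψ v = a (fun i => v i.1) * b (fun i => v i.1)

/-!
Moving each partial transpose across the trace turns `Ψ = ∑ₖ ϱₖ^{Tₖ}` into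
`∑ₖ Tr((1 - Ψ^{Tₖ}) ϱₖ) = Tr Ψ - Tr Ψ² = 0`. Cauchy–Schwarz across the bipartition `k` gives
`Ψ^{Tₖ} ≤ 1`, so every summand, a trace of a product of positive matrices, vanishes, and every
column `x` of `ϱₖ` satisfies `Ψ^{Tₖ} x = x`. Equality in that Cauchy–Schwarz bound forces `ψ` to be
a product across `k`, hence `ϱₖ = 0` for non-constant `k`. What remains is
`Ψ = ϱ_false + ϱ_trueᵀ` with `Ψ ϱ_false = ϱ_false`, and a positive summand of a rank-one projector
that it fixes is a multiple of it.
-/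

open scoped InnerProductSpace

namespace Matrix

lemma star_dotProduct_self_eq {n : Type*} [Fintype n] (x : n → ℂ) :
    star x ⬝ᵥ x = ((∑ v, ‖x v‖ ^ 2 : ℝ) : ℂ) := by
  push_cast
  simp [dotProduct, Complex.conj_mul']

lemma IsHermitian.eq_smul_vecMulVec_of_vecMulVec_mul_eq {n R : Type*} [Fintype n] [CommRing R]
    [StarRing R] {A : Matrix n n R} (hA : A.IsHermitian) {φ : n → R}
    (h : vecMulVec φ (star φ) * A = A) :
    A = (star φ ⬝ᵥ A *ᵥ φ) • vecMulVec φ (star φ) := by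
  have h' : A * vecMulVec φ (star φ) = A := by
    simpa [conjTranspose_mul, hA.eq, conjTranspose_vecMulVec] using congr(($h)ᴴ)
  calc A = vecMulVec φ (star φ) * A * vecMulVec φ (star φ) := by rw [h, h']
    _ = _ := by rw [vecMulVec_mul, vecMulVec_mul_vecMulVec, vecMulVec_smul, dotProduct_mulVec]

lemma exists_eq_smul_of_add_eq_vecMulVec {n : Type*} [Fintype n] {φ : n → ℂ}
    (hφ : star φ ⬝ᵥ φ = 1) {A B : Matrix n n ℂ} (hA : A.PosSemidef) (hB : B.PosSemidef)
    (hAB : A + B = vecMulVec φ (star φ)) (hfix : vecMulVec φ (star φ) * A = A) :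
    ∃ p : ℝ, 0 ≤ p ∧ p ≤ 1 ∧ A = (p : ℂ) • vecMulVec φ (star φ) ∧
      B = ((1 - p : ℝ) : ℂ) • vecMulVec φ (star φ) := by
  set c := star φ ⬝ᵥ A *ᵥ φ
  have hA_eq : A = c • vecMulVec φ (star φ) := hA.1.eq_smul_vecMulVec_of_vecMulVec_mul_eq hfix
  have hB_eq : B = (1 - c) • vecMulVec φ (star φ) := by
    rw [eq_sub_of_add_eq' hAB, sub_smul, one_smul, ← hA_eq]
  have hc : 0 ≤ c := hA.dotProduct_mulVec_nonneg φ
  have hΨφ : star φ ⬝ᵥ vecMulVec φ (star φ) *ᵥ φ = 1 := by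
    rw [vecMulVec_mulVec, hφ, MulOpposite.op_one, one_smul, hφ]
  have hc' : 0 ≤ 1 - c := by
    simpa [hB_eq, smul_mulVec, hΨφ] using hB.dotProduct_mulVec_nonneg φ
  have hc_re : (c.re : ℂ) = c := (Complex.eq_re_of_ofReal_le hc).symm
  refine ⟨c.re, (Complex.nonneg_iff.1 hc).1, ?_, by rw [hc_re, hA_eq], by push_cast; rw [hc_re, hB_eq]⟩
  simpa using (Complex.nonneg_iff.1 hc').1

end Matrix

namespace Matrix.PosSemidef

open scoped MatrixOrder

variable {𝕜 n : Type*} [RCLike 𝕜] [Fintype n] [DecidableEq n] {A B : Matrix n n 𝕜}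

lemma exists_mul_eq_and_trace_mul_eq (hA : A.PosSemidef) (hB : B.PosSemidef) :
    ∃ C M D : Matrix n n 𝕜, A * B = Cᴴ * M * D ∧ (A * B).trace = (M * Mᴴ).trace := by
  obtain ⟨C, rfl⟩ := CStarAlgebra.nonneg_iff_eq_star_mul_self.mp hA.nonneg
  obtain ⟨D, rfl⟩ := CStarAlgebra.nonneg_iff_eq_star_mul_self.mp hB.nonneg
  refine ⟨C, C * Dᴴ, D, by simp [star_eq_conjTranspose, Matrix.mul_assoc], ?_⟩
  rw [star_eq_conjTranspose, star_eq_conjTranspose, conjTranspose_mul, conjTranspose_conjTranspose,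
    Matrix.mul_assoc, trace_mul_comm]
  simp only [Matrix.mul_assoc]

lemma trace_mul_nonneg (hA : A.PosSemidef) (hB : B.PosSemidef) : 0 ≤ (A * B).trace := by
  obtain ⟨C, M, D, -, htr⟩ := exists_mul_eq_and_trace_mul_eq hA hB
  exact htr ▸ (posSemidef_self_mul_conjTranspose M).trace_nonneg

lemma mul_eq_zero_of_trace_mul_eq_zero (hA : A.PosSemidef) (hB : B.PosSemidef)
    (h : (A * B).trace = 0) : A * B = 0 := by
  obtain ⟨C, M, D, hAB, htr⟩ := exists_mul_eq_and_trace_mul_eq hA hB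
  rw [htr, trace_mul_conjTranspose_self_eq_zero_iff] at h
  rw [hAB, h, Matrix.mul_zero, Matrix.zero_mul]

end Matrix.PosSemidef

lemma norm_sum_mul_conj_swap_le {β : Type*} [Fintype β] (C : β → β → ℂ) :
    ‖∑ b, ∑ e, C b e * starRingEnd ℂ (C e b)‖ ≤ ∑ b, ∑ e, ‖C b e‖ ^ 2 := by
  have hswap : ∑ b, ∑ e, ‖C e b‖ ^ 2 = ∑ b, ∑ e, ‖C b e‖ ^ 2 := Finset.sum_comm
  calc ‖∑ b, ∑ e, C b e * starRingEnd ℂ (C e b)‖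
      ≤ ∑ b, ∑ e, ‖C b e‖ * ‖C e b‖ := by
        refine (norm_sum_le _ _).trans (Finset.sum_le_sum fun b _ => (norm_sum_le _ _).trans_eq ?_)
        simp
    _ ≤ ∑ b, ∑ e, (‖C b e‖ ^ 2 + ‖C e b‖ ^ 2) / 2 := by
        gcongr with b _ e _
        nlinarith [sq_nonneg (‖C b e‖ - ‖C e b‖)]
    _ = ∑ b, ∑ e, ‖C b e‖ ^ 2 := by
        simp only [add_div, Finset.sum_add_distrib, ← Finset.sum_div, hswap]
        ring

section CauchySchwarz

variable {E β : Type*} [NormedAddCommGroup E] [InnerProductSpace ℂ E] [Fintype β]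

lemma norm_inner_sq_le (x y : E) : ‖⟪x, y⟫_ℂ‖ ^ 2 ≤ ‖x‖ ^ 2 * ‖y‖ ^ 2 := by
  rw [← mul_pow]
  gcongr
  exact norm_inner_le_norm x y

lemma norm_sum_inner_mul_conj_inner_le (u w : β → E) :
    ‖∑ b, ∑ e, ⟪u b, w e⟫_ℂ * starRingEnd ℂ ⟪u e, w b⟫_ℂ‖
      ≤ (∑ b, ‖u b‖ ^ 2) * ∑ e, ‖w e‖ ^ 2 := by
  refine (norm_sum_mul_conj_swap_le _).trans ?_
  rw [Finset.sum_mul_sum]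
  gcongr with b _ e _
  exact norm_inner_sq_le _ _

lemma exists_eq_smul_of_le_norm_sum_inner_mul_conj_inner (u w : β → E) {e₀ : β}
    (he₀ : w e₀ ≠ 0)
    (h : (∑ b, ‖u b‖ ^ 2) * ∑ e, ‖w e‖ ^ 2
      ≤ ‖∑ b, ∑ e, ⟪u b, w e⟫_ℂ * starRingEnd ℂ ⟪u e, w b⟫_ℂ‖) (b : β) :
    ∃ r : ℂ, u b = r • w e₀ := by
  have hle : ∀ p ∈ (Finset.univ : Finset (β × β)),
      ‖⟪u p.1, w p.2⟫_ℂ‖ ^ 2 ≤ ‖u p.1‖ ^ 2 * ‖w p.2‖ ^ 2 := fun p _ => norm_inner_sq_le _ _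
  have hsum : ∑ p : β × β, ‖⟪u p.1, w p.2⟫_ℂ‖ ^ 2 = ∑ p : β × β, ‖u p.1‖ ^ 2 * ‖w p.2‖ ^ 2 := by
    refine le_antisymm (Finset.sum_le_sum hle) ?_
    simp only [Fintype.sum_prod_type, ← Finset.sum_mul_sum]
    exact h.trans (norm_sum_mul_conj_swap_le _)
  have hsq := (Finset.sum_eq_sum_iff_of_le hle).1 hsum (b, e₀) (Finset.mem_univ _)
  have hnorm : ‖⟪w e₀, u b⟫_ℂ‖ = ‖w e₀‖ * ‖u b‖ := by
    rw [← mul_pow, sq_eq_sq₀ (norm_nonneg _) (by positivity)] at hsq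
    rw [norm_inner_symm, hsq, mul_comm]
  have := (norm_inner_eq_norm_tfae ℂ (w e₀) (u b)).out 0 2
  exact (this.1 hnorm).resolve_left he₀

end CauchySchwarz

section PartialTranspose

variable {N : ℕ} {d : Fin N → ℕ} (k : Fin N → Bool)

lemma ptK_false (M : Matrix (∀ i, Fin (d i)) (∀ i, Fin (d i)) ℂ) : ptK (fun _ => false) M = M :=
  rfl

lemma ptK_true (M : Matrix (∀ i, Fin (d i)) (∀ i, Fin (d i)) ℂ) : ptK (fun _ => true) M = Mᵀ :=
  rfl

lemma trace_ptK (M : Matrix (∀ i, Fin (d i)) (∀ i, Fin (d i)) ℂ) : (ptK k M).trace = M.trace := by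
  simp [trace, ptK]

lemma trace_mul_ptK (A B : Matrix (∀ i, Fin (d i)) (∀ i, Fin (d i)) ℂ) :
    (A * ptK k B).trace = (ptK k A * B).trace := by
  let σ (p : (∀ i, Fin (d i)) × (∀ i, Fin (d i))) : (∀ i, Fin (d i)) × (∀ i, Fin (d i)) :=
    (fun i => if k i then p.2 i else p.1 i, fun i => if k i then p.1 i else p.2 i)
  have hσ : Function.Involutive σ := fun p => by ext i <;> by_cases h : k i <;> simp [σ, h]
  simp only [trace, diag, mul_apply, ← Fintype.sum_prod_type']
  refine Fintype.sum_bijective σ hσ.bijective _ _ fun p => ?_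
  simp only [σ, ptK]
  congr 2 <;> funext i <;> by_cases h : k i <;> simp [h]

lemma Matrix.IsHermitian.ptK {M : Matrix (∀ i, Fin (d i)) (∀ i, Fin (d i)) ℂ}
    (hM : M.IsHermitian) : (ptK k M).IsHermitian := by
  ext v w
  exact hM.apply _ _

end PartialTranspose

section Bipartition

variable {N : ℕ} {d : Fin N → ℕ} (k : Fin N → Bool)

def mergeParts (a : ∀ i : {i : Fin N // k i = true}, Fin (d i.1))
    (b : ∀ i : {i : Fin N // k i = false}, Fin (d i.1)) : ∀ i, Fin (d i) :=
  fun i => if h : k i = true then a ⟨i, h⟩ else b ⟨i, Bool.eq_false_iff.2 h⟩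

@[simp]
lemma mergeParts_restrict (v : ∀ i, Fin (d i)) :
    mergeParts k (fun i => v i.1) (fun i => v i.1) = v := by
  funext i
  by_cases h : k i <;> simp [mergeParts, h]

def mergePartsEquiv :
    (∀ i : {i : Fin N // k i = true}, Fin (d i.1)) × (∀ i : {i : Fin N // k i = false}, Fin (d i.1))
      ≃ ∀ i, Fin (d i) where
  toFun p := mergeParts k p.1 p.2
  invFun v := (fun i => v i.1, fun i => v i.1)
  left_inv p := by ext i <;> simp [mergeParts, i.2]
  right_inv := mergeParts_restrict k

lemma sum_eq_sum_sum_mergeParts {M : Type*} [AddCommMonoid M] (f : (∀ i, Fin (d i)) → M) :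
    ∑ v, f v = ∑ a, ∑ b, f (mergeParts k a b) := by
  rw [← Fintype.sum_prod_type', ← (mergePartsEquiv k).sum_comp]
  rfl

lemma ptK_mergeParts (M : Matrix (∀ i, Fin (d i)) (∀ i, Fin (d i)) ℂ)
    (a c : ∀ i : {i : Fin N // k i = true}, Fin (d i.1))
    (b e : ∀ i : {i : Fin N // k i = false}, Fin (d i.1)) :
    ptK k M (mergeParts k a b) (mergeParts k c e) = M (mergeParts k c b) (mergeParts k a e) := by
  unfold ptK
  congr 1 <;> funext i <;> by_cases h : k i <;> simp [mergeParts, h]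

def partColumn (f : (∀ i, Fin (d i)) → ℂ) (b : ∀ i : {i : Fin N // k i = false}, Fin (d i.1)) :
    EuclideanSpace ℂ (∀ i : {i : Fin N // k i = true}, Fin (d i.1)) :=
  WithLp.toLp 2 fun a => f (mergeParts k a b)

lemma sum_norm_partColumn_sq (f : (∀ i, Fin (d i)) → ℂ) :
    ∑ b, ‖partColumn k f b‖ ^ 2 = ∑ v, ‖f v‖ ^ 2 := by
  rw [sum_eq_sum_sum_mergeParts k, Finset.sum_comm]
  simp [partColumn, EuclideanSpace.norm_sq_eq]

lemma star_dotProduct_ptK_mulVec (ψ x : (∀ i, Fin (d i)) → ℂ) :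
    star x ⬝ᵥ ptK k (vecMulVec ψ (star ψ)) *ᵥ x
      = ∑ b, ∑ e, ⟪partColumn k (star ψ) b, partColumn k x e⟫_ℂ
          * starRingEnd ℂ ⟪partColumn k (star ψ) e, partColumn k x b⟫_ℂ := by
  simp only [dotProduct, mulVec, sum_eq_sum_sum_mergeParts k, ptK_mergeParts, partColumn,
    EuclideanSpace.inner_toLp_toLp, vecMulVec_apply, Pi.star_apply, RCLike.star_def,
    Complex.conj_conj, map_sum, map_mul, Finset.mul_sum, Finset.sum_mul]
  rw [Finset.sum_comm]
  refine Finset.sum_congr rfl fun b _ => ?_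
  rw [Finset.sum_congr rfl fun a _ => Finset.sum_comm, Finset.sum_comm]
  exact Finset.sum_congr rfl fun e _ => Finset.sum_congr rfl fun a _ =>
    Finset.sum_congr rfl fun c _ => by ring

lemma norm_star_dotProduct_ptK_mulVec_le (ψ x : (∀ i, Fin (d i)) → ℂ) :
    ‖star x ⬝ᵥ ptK k (vecMulVec ψ (star ψ)) *ᵥ x‖ ≤ (∑ v, ‖ψ v‖ ^ 2) * ∑ v, ‖x v‖ ^ 2 := by
  simpa only [← star_dotProduct_ptK_mulVec, sum_norm_partColumn_sq, Pi.star_apply, norm_star]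
    using norm_sum_inner_mul_conj_inner_le (partColumn k (star ψ)) (partColumn k x)

end Bipartition

section PureState

variable {N : ℕ} {d : Fin N → ℕ} (k : Fin N → Bool) {ψ : (∀ i, Fin (d i)) → ℂ}

lemma posSemidef_one_sub_ptK (hψ : ∑ v, ‖ψ v‖ ^ 2 = 1) :
    (1 - ptK k (vecMulVec ψ (star ψ))).PosSemidef := by
  have hP := (posSemidef_vecMulVec_self_star ψ).1.ptK k
  refine .of_dotProduct_mulVec_nonneg (isHermitian_one.sub hP) fun x => ?_
  have him : (star x ⬝ᵥ ptK k (vecMulVec ψ (star ψ)) *ᵥ x).im = 0 :=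
    hP.im_star_dotProduct_mulVec_self x
  have hre : (star x ⬝ᵥ ptK k (vecMulVec ψ (star ψ)) *ᵥ x).re ≤ ∑ v, ‖x v‖ ^ 2 :=
    (Complex.re_le_norm _).trans (by simpa [hψ] using norm_star_dotProduct_ptK_mulVec_le k ψ x)
  rw [sub_mulVec, one_mulVec, dotProduct_sub, star_dotProduct_self_eq, Complex.nonneg_iff]
  simp only [Complex.sub_re, Complex.ofReal_re, Complex.sub_im, Complex.ofReal_im, him]
  constructor <;> linarith

lemma productAcross_of_ptK_mulVec_eq_self (hψ : ∑ v, ‖ψ v‖ ^ 2 = 1)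
    {x : (∀ i, Fin (d i)) → ℂ} (hx : x ≠ 0) (hfix : ptK k (vecMulVec ψ (star ψ)) *ᵥ x = x) :
    ProductAcross k ψ := by
  obtain ⟨v₀, hv₀⟩ := Function.ne_iff.1 hx
  have hcol : partColumn k x (fun i => v₀ i.1) ≠ 0 := fun h =>
    hv₀ (by simpa [partColumn] using congr(($h).ofLp (fun i => v₀ i.1)))
  have hle : (∑ b, ‖partColumn k (star ψ) b‖ ^ 2) * ∑ e, ‖partColumn k x e‖ ^ 2
      ≤ ‖∑ b, ∑ e, ⟪partColumn k (star ψ) b, partColumn k x e⟫_ℂ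
          * starRingEnd ℂ ⟪partColumn k (star ψ) e, partColumn k x b⟫_ℂ‖ := by
    rw [← star_dotProduct_ptK_mulVec, hfix, star_dotProduct_self_eq, sum_norm_partColumn_sq,
      sum_norm_partColumn_sq, Complex.norm_real, Real.norm_of_nonneg (by positivity)]
    simp [hψ]
  choose r hr using exists_eq_smul_of_le_norm_sum_inner_mul_conj_inner _ _ hcol hle
  refine ⟨fun a => star (x (mergeParts k a fun i => v₀ i.1)), fun b => star (r b), fun v => ?_⟩
  have hv := congr(($(hr fun i => v i.1)).ofLp fun i => v i.1)
  simp only [partColumn, mergeParts_restrict, Pi.star_apply, PiLp.smul_apply, smul_eq_mul] at hv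
  rw [← star_star (ψ v), hv, star_mul', mul_comm]

end PureState

lemma ptK_mul_eq_self_of_eq_sum {N : ℕ} {d : Fin N → ℕ} {ψ : (∀ i, Fin (d i)) → ℂ}
    (hψ : ∑ v, ‖ψ v‖ ^ 2 = 1) {ϱ : (Fin N → Bool) → Matrix (∀ i, Fin (d i)) (∀ i, Fin (d i)) ℂ}
    (hϱ : ∀ k, (ϱ k).PosSemidef) (hsum : vecMulVec ψ (star ψ) = ∑ k, ptK k (ϱ k))
    (k : Fin N → Bool) : ptK k (vecMulVec ψ (star ψ)) * ϱ k = ϱ k := by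
  set Ψ := vecMulVec ψ (star ψ)
  have hunit : star ψ ⬝ᵥ ψ = 1 := by rw [star_dotProduct_self_eq, hψ, Complex.ofReal_one]
  have htr : Ψ.trace = 1 := by rw [trace_vecMulVec, dotProduct_comm, hunit]
  have hidem : Ψ * Ψ = Ψ := by rw [vecMulVec_mul_vecMulVec, hunit, one_smul]
  have hdefect : ∑ k, ((1 - ptK k Ψ) * ϱ k).trace = 0 := by
    calc ∑ k, ((1 - ptK k Ψ) * ϱ k).trace
        = ∑ k, (ptK k (ϱ k)).trace - ∑ k, (Ψ * ptK k (ϱ k)).trace := by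
          simp only [Matrix.sub_mul, Matrix.one_mul, trace_sub, Finset.sum_sub_distrib, trace_ptK,
            trace_mul_ptK]
      _ = Ψ.trace - (Ψ * Ψ).trace := by
          rw [← trace_sum, ← trace_sum, ← Matrix.mul_sum, ← hsum]
      _ = 0 := by rw [hidem, sub_self]
  have hpos k : 0 ≤ ((1 - ptK k Ψ) * ϱ k).trace :=
    (posSemidef_one_sub_ptK k hψ).trace_mul_nonneg (hϱ k)
  have hk := (Finset.sum_eq_zero_iff_of_nonneg fun k _ => hpos k).1 hdefect k (Finset.mem_univ k)
  have h := (posSemidef_one_sub_ptK k hψ).mul_eq_zero_of_trace_mul_eq_zero (hϱ k) hk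
  rwa [Matrix.sub_mul, Matrix.one_mul, sub_eq_zero, eq_comm] at h

lemma productAcross_of_ptK_mul_eq_self {N : ℕ} {d : Fin N → ℕ} (k : Fin N → Bool)
    {ψ : (∀ i, Fin (d i)) → ℂ} (hψ : ∑ v, ‖ψ v‖ ^ 2 = 1)
    {ϱ : Matrix (∀ i, Fin (d i)) (∀ i, Fin (d i)) ℂ} (hϱ : ϱ ≠ 0)
    (hfix : ptK k (vecMulVec ψ (star ψ)) * ϱ = ϱ) : ProductAcross k ψ := by
  obtain ⟨u, w, huw⟩ : ∃ u w, ϱ u w ≠ 0 := by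
    by_contra! h
    exact hϱ (Matrix.ext h)
  refine productAcross_of_ptK_mulVec_eq_self k hψ (x := fun u => ϱ u w)
    (Function.ne_iff.2 ⟨u, huw⟩) ?_
  ext v
  simpa [mulVec, dotProduct, mul_apply] using congr_fun (congr_fun hfix v) w

lemma sum_ptK_eq_add_transpose {N : ℕ} {d : Fin N → ℕ} (hN : 0 < N)
    {ϱ : (Fin N → Bool) → Matrix (∀ i, Fin (d i)) (∀ i, Fin (d i)) ℂ}
    (hϱ : ∀ k, k ≠ (fun _ => false) → k ≠ (fun _ => true) → ϱ k = 0) :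
    ∑ k, ptK k (ϱ k) = ϱ (fun _ => false) + (ϱ fun _ => true)ᵀ := by
  have hft : (fun _ => false : Fin N → Bool) ≠ fun _ => true := fun h => by
    simpa using congr_fun h ⟨0, hN⟩
  rw [← Finset.sum_subset (Finset.subset_univ {fun _ => false, fun _ => true}),
    Finset.sum_pair hft, ptK_false, ptK_true]
  intro k _ hk
  simp only [Finset.mem_insert, Finset.mem_singleton, not_or] at hk
  rw [hϱ k hk.1 hk.2]
  rfl

theorem stmt6_general (N : ℕ) (hN : 2 ≤ N) (d : Fin N → ℕ)
    (ψ : (∀ i, Fin (d i)) → ℂ) (hψ : ∑ v, Complex.normSq (ψ v) = 1)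
    (hGME : ∀ k : Fin N → Bool, k ≠ (fun _ => false) → k ≠ (fun _ => true) →
      ¬ ProductAcross k ψ)
    (ϱ : (Fin N → Bool) → Matrix (∀ i, Fin (d i)) (∀ i, Fin (d i)) ℂ)
    (hϱ : ∀ k, (ϱ k).PosSemidef)
    (Ψ : Matrix (∀ i, Fin (d i)) (∀ i, Fin (d i)) ℂ)
    (hΨ : ∀ v w, Ψ v w = ψ v * (starRingEnd ℂ) (ψ w))
    (hsum : Ψ = ∑ k : Fin N → Bool, ptK k (ϱ k)) :
    (∀ k : Fin N → Bool, k ≠ (fun _ => false) → k ≠ (fun _ => true) → ϱ k = 0) ∧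
    ∃ p : ℝ, 0 ≤ p ∧ p ≤ 1 ∧
      ϱ (fun _ => false) = ((p : ℝ) : ℂ) • Ψ ∧
      ϱ (fun _ => true) = (((1 - p : ℝ)) : ℂ) • Ψᵀ := by
  obtain rfl : Ψ = vecMulVec ψ (star ψ) := Matrix.ext hΨ
  have hψ' : ∑ v, ‖ψ v‖ ^ 2 = 1 := by simpa only [Complex.normSq_eq_norm_sq] using hψ
  have hfix := ptK_mul_eq_self_of_eq_sum hψ' hϱ hsum
  have hzero (k : Fin N → Bool) (hkf : k ≠ fun _ => false) (hkt : k ≠ fun _ => true) :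
      ϱ k = 0 :=
    by_contra fun hne => hGME k hkf hkt (productAcross_of_ptK_mul_eq_self k hψ' hne (hfix k))
  have hunit : star ψ ⬝ᵥ ψ = 1 := by rw [star_dotProduct_self_eq, hψ', Complex.ofReal_one]
  obtain ⟨p, hp0, hp1, hfalse, htrue⟩ := exists_eq_smul_of_add_eq_vecMulVec hunit (hϱ _)
    (hϱ _).transpose (hsum.trans (sum_ptK_eq_add_transpose (by omega) hzero)).symm
    (hfix fun _ => false)
  refine ⟨hzero, p, hp0, hp1, hfalse, ?_⟩
  rw [← transpose_transpose (ϱ _), htrue, transpose_smul]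

theorem stmt6 (N : ℕ) (hN : 2 ≤ N) (d : Fin N → ℕ) (hd : ∀ i, 1 ≤ d i)
    (ψ : (∀ i, Fin (d i)) → ℂ) (hψ : ∑ v, Complex.normSq (ψ v) = 1)
    (hGME : ∀ k : Fin N → Bool, k ≠ (fun _ => false) → k ≠ (fun _ => true) →
      ¬ ProductAcross k ψ)
    (ϱ : (Fin N → Bool) → Matrix (∀ i, Fin (d i)) (∀ i, Fin (d i)) ℂ)
    (hϱ : ∀ k, (ϱ k).PosSemidef)
    (Ψ : Matrix (∀ i, Fin (d i)) (∀ i, Fin (d i)) ℂ)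
    (hΨ : ∀ v w, Ψ v w = ψ v * (starRingEnd ℂ) (ψ w))
    (hsum : Ψ = ∑ k : Fin N → Bool, ptK k (ϱ k)) :
    (∀ k : Fin N → Bool, k ≠ (fun _ => false) → k ≠ (fun _ => true) → ϱ k = 0) ∧
    ∃ p : ℝ, 0 ≤ p ∧ p ≤ 1 ∧
      ϱ (fun _ => false) = ((p : ℝ) : ℂ) • Ψ ∧
      ϱ (fun _ => true) = (((1 - p : ℝ)) : ℂ) • Ψᵀ :=
  stmt6_general N hN d ψ hψ hGME ϱ hϱ Ψ hΨ hsum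
end

section
/- Let α, β, α', β' be finite index types, let ρ : Matrix (α × β) (α × β) ℂ lie in the separable cone over α, β, and let K : ι → Matrix α' α ℂ and L : κ → Matrix β' β ℂ be finite families of matrices (Kraus operators of local maps). Then the matrix ∑_{i,m} (K i ⊗ₖ L m) * ρ * (K i ⊗ₖ L m)ᴴ lies in the separable cone over α', β'. -/
open Matrix BigOperators ComplexOrder Kronecker

/-- The separable cone: sums of Kronecker products of PSD matrices. -/
def SepCone (α β : Type*) [Fintype α] [Fintype β] : Set (Matrix (α × β) (α × β) ℂ) :=
  { σ | ∃ (ι : Type) (_ : Fintype ι) (P : ι → Matrix α α ℂ) (Q : ι → Matrix β β ℂ),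
      (∀ i, (P i).PosSemidef) ∧ (∀ i, (Q i).PosSemidef) ∧ σ = ∑ i, P i ⊗ₖ Q i }

lemma kron_conjT {m n p q : Type*} (A : Matrix m n ℂ) (B : Matrix p q ℂ) :
    (A ⊗ₖ B)ᴴ = Aᴴ ⊗ₖ Bᴴ := by
  ext ⟨i, j⟩ ⟨k, l⟩
  simp [conjTranspose_apply, kroneckerMap_apply]

theorem stmt9 {α β α' β' ι κ : Type*} [Fintype α] [Fintype β] [Fintype α'] [Fintype β']
    [Fintype ι] [Fintype κ]
    (ρ : Matrix (α × β) (α × β) ℂ) (hρ : ρ ∈ SepCone α β)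
    (K : ι → Matrix α' α ℂ) (L : κ → Matrix β' β ℂ) :
    (∑ i : ι, ∑ m : κ, (K i ⊗ₖ L m) * ρ * (K i ⊗ₖ L m)ᴴ) ∈ SepCone α' β' := by
  obtain ⟨γ, _, P, Q, hP, hQ, rfl⟩ := hρ
  classical
  let eι := Fintype.equivFin ι
  let eκ := Fintype.equivFin κ
  refine ⟨Fin (Fintype.card ι) × Fin (Fintype.card κ) × γ, inferInstance,
    fun x => K (eι.symm x.1) * P x.2.2 * (K (eι.symm x.1))ᴴ,
    fun x => L (eκ.symm x.2.1) * Q x.2.2 * (L (eκ.symm x.2.1))ᴴ,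
    fun x => (hP _).mul_mul_conjTranspose_same _,
    fun x => (hQ _).mul_mul_conjTranspose_same _, ?_⟩
  rw [Fintype.sum_prod_type]
  refine Fintype.sum_equiv eι _ _ fun i => ?_
  rw [Fintype.sum_prod_type]
  refine Fintype.sum_equiv eκ _ _ fun m => ?_
  simp only [Equiv.symm_apply_apply]
  simp only [Matrix.mul_sum, Matrix.sum_mul]
  refine Finset.sum_congr rfl fun j _ => ?_
  rw [kron_conjT, ← Matrix.mul_kronecker_mul, ← Matrix.mul_kronecker_mul]
end

section
/- Let α and β be finite nonempty index types and let ρ : Matrix (α × β) (α × β) ℂ be a density matrix that is entangled, i.e. ρ does not lie in the separable cone. Then there exists a Hermitian matrix W : Matrix (α × β) (α × β) ℂ (an entanglement witness for ρ) such that re(trace(W * ρ)) < 0 while re(trace(W * σ)) ≥ 0 for every σ in the separable cone. -/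
open Matrix BigOperators ComplexOrder Kronecker

/-!
The product states `P ⊗ₖ Q` of density matrices form a compact set, hence (Carathéodory) so does
their convex hull; it lies in the separable cone, so it misses `ρ`. Hahn–Banach gives a functional
`f` and a level `u` with `re (f ρ) < u < re (f k)` on the hull. The functional `re f - u • re trace`
is negative at `ρ` (as `trace ρ = 1`) and positive on product states, and it is the trace pairing
with a Hermitian matrix `W`. Every term `P ⊗ₖ Q` of a separable matrix is a nonnegative multiple
of a product state, so `W` is nonnegative on the separable cone.
-/

theorem isCompact_convexHull_of_isCompact {E : Type*} [AddCommGroup E] [Module ℝ E]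
    [TopologicalSpace E] [ContinuousAdd E] [ContinuousSMul ℝ E] [FiniteDimensional ℝ E]
    {s : Set E} (hs : IsCompact s) : IsCompact (convexHull ℝ s) := by
  let combo (m : ℕ) : (Fin m → ℝ) × (Fin m → E) → E := fun wz => ∑ i, wz.1 i • wz.2 i
  -- Carathéodory: `finrank ℝ E + 1` points suffice for every convex combination.
  have hull_eq : convexHull ℝ s = ⋃ m ∈ Finset.range (Module.finrank ℝ E + 2),
      combo m '' (stdSimplex ℝ (Fin m) ×ˢ Set.univ.pi fun _ => s) := by
    apply subset_antisymm
    · intro x hx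
      obtain ⟨ι, _, z, w, hzs, hz, hw, hw1, rfl⟩ := eq_pos_convex_span_of_mem_convexHull hx
      have hcard : Fintype.card ι < Module.finrank ℝ E + 2 :=
        Nat.lt_succ_of_le (hz.card_le_finrank_succ.trans (by gcongr; exact Submodule.finrank_le _))
      let e := Fintype.equivFin ι
      refine Set.mem_biUnion (Finset.mem_range.2 hcard)
        ⟨(w ∘ e.symm, z ∘ e.symm), ⟨⟨fun i => (hw _).le, ?_⟩, fun i _ => hzs ⟨_, rfl⟩⟩, ?_⟩
      · rwa [Function.comp_def, e.symm.sum_comp w]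
      · exact e.symm.sum_comp fun i => w i • z i
    · refine Set.iUnion₂_subset fun m _ => ?_
      rintro _ ⟨⟨w, z⟩, ⟨⟨hw0, hw1⟩, hz⟩, rfl⟩
      exact (convex_convexHull ℝ s).sum_mem (fun i _ => hw0 i) hw1
        fun i _ => subset_convexHull ℝ s (hz i trivial)
  rw [hull_eq]
  exact (Finset.range _).isCompact_biUnion fun m _ =>
    ((isCompact_stdSimplex ℝ _).prod (isCompact_univ_pi fun _ => hs)).image (by fun_prop)

namespace Matrix

instance {m n E : Type*} [AddCommGroup E] [TopologicalSpace E] [Module ℝ E]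
    [LocallyConvexSpace ℝ E] : LocallyConvexSpace ℝ (Matrix m n E) :=
  inferInstanceAs (LocallyConvexSpace ℝ (m → n → E))

theorem PosSemidef.normSq_apply_le_s10 {n : Type*} {P : Matrix n n ℂ} (hP : P.PosSemidef) (i j : n) :
    Complex.normSq (P i j) ≤ (P i i).re * (P j j).re := by
  have hdet := (hP.submatrix ![i, j]).det_nonneg
  have hji : P j i = star (P i j) := (hP.isHermitian.apply j i).symm
  simp only [det_fin_two, submatrix_apply, cons_val_zero, cons_val_one, hji] at hdet
  have hii := hP.diag_nonneg (i := i)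
  have hjj := hP.diag_nonneg (i := j)
  rw [Complex.nonneg_iff] at hdet hii hjj
  have hre := hdet.1
  simp only [Complex.sub_re, Complex.mul_re, ← hii.2, ← hjj.2, RCLike.star_def, Complex.conj_re,
    Complex.conj_im, Complex.normSq_apply] at hre ⊢
  linarith

variable {n : Type*} [Fintype n]

theorem PosSemidef.re_apply_self_le_re_trace {P : Matrix n n ℂ} (hP : P.PosSemidef) (i : n) :
    (P i i).re ≤ P.trace.re := by
  rw [trace, Complex.re_sum]
  exact Finset.single_le_sum (f := fun j => (P j j).re)
    (fun j _ => (Complex.nonneg_iff.1 hP.diag_nonneg).1) (Finset.mem_univ i)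

theorem isClosed_setOf_posSemidef : IsClosed {P : Matrix n n ℂ | P.PosSemidef} := by
  simp only [posSemidef_iff_dotProduct_mulVec, Set.ofPred_and, Set.ofPred_forall]
  exact (isClosed_eq (by fun_prop) continuous_id).inter
    (isClosed_iInter fun x => isClosed_le continuous_const (by fun_prop))

theorem exists_trace_mul_eq {R : Type*} [CommSemiring R] (g : Matrix n n R →ₗ[R] R) :
    ∃ B : Matrix n n R, ∀ σ, (B * σ).trace = g σ := by
  classical
  refine ⟨of fun j i => g (single i j 1), fun σ => ?_⟩
  calc (of (fun j i => g (single i j 1)) * σ).trace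
      = ∑ i, ∑ j, σ i j • g (single i j 1) := by
        simp only [trace, diag, mul_apply, of_apply, smul_eq_mul, mul_comm]
        exact Finset.sum_comm
    _ = g σ := by
        conv_rhs => rw [matrix_eq_sum_single σ]
        simp only [map_sum]
        refine Finset.sum_congr rfl fun i _ => Finset.sum_congr rfl fun j _ => ?_
        rw [← map_smul, smul_single, smul_eq_mul, mul_one]

theorem exists_isHermitian_re_trace_mul_eq (g : Matrix n n ℂ →ₗ[ℂ] ℂ) :
    ∃ W : Matrix n n ℂ, W.IsHermitian ∧ ∀ σ, σ.IsHermitian → (W * σ).trace.re = (g σ).re := by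
  -- `B + Bᴴ` pairs with a Hermitian `σ` to twice `re (B * σ).trace`, hence the factor `2⁻¹`.
  obtain ⟨B, hB⟩ := exists_trace_mul_eq ((2⁻¹ : ℝ) • g)
  refine ⟨B + Bᴴ, isHermitian_add_transpose_self B, fun σ hσ => ?_⟩
  have hstar : (Bᴴ * σ).trace = star (B * σ).trace := by
    rw [← trace_conjTranspose, conjTranspose_mul, hσ.eq, trace_mul_comm]
  rw [add_mul, trace_add, hstar, hB]
  simp only [LinearMap.smul_apply, Complex.add_re, Complex.smul_re, RCLike.star_def,
    Complex.conj_re, smul_eq_mul]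
  ring

end Matrix

def densityMatrices (n : Type*) [Fintype n] : Set (Matrix n n ℂ) :=
  {P | P.PosSemidef ∧ P.trace = 1}

section DensityMatrices

variable {n : Type*} [Fintype n]

theorem norm_apply_le_one_of_mem_densityMatrices {P : Matrix n n ℂ} (hP : P ∈ densityMatrices n)
    (i j : n) : ‖P i j‖ ≤ 1 := by
  have hii := hP.1.re_apply_self_le_re_trace i
  have hjj := hP.1.re_apply_self_le_re_trace j
  have h0 := (Complex.nonneg_iff.1 (hP.1.diag_nonneg (i := i))).1
  rw [hP.2, Complex.one_re] at hii hjj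
  have hij := hP.1.normSq_apply_le_s10 i j
  rw [Complex.normSq_eq_norm_sq] at hij
  nlinarith [norm_nonneg (P i j)]

theorem isCompact_densityMatrices : IsCompact (densityMatrices n) :=
  (isCompact_univ_pi fun _ => isCompact_univ_pi fun _ =>
      isCompact_closedBall (0 : ℂ) 1).of_isClosed_subset
    (Matrix.isClosed_setOf_posSemidef.inter (isClosed_eq (by fun_prop) continuous_const))
    fun P hP i _ j _ => by simpa using norm_apply_le_one_of_mem_densityMatrices hP i j

theorem Matrix.PosSemidef.ofReal_re_trace {P : Matrix n n ℂ} (hP : P.PosSemidef) :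
    ((P.trace.re : ℝ) : ℂ) = P.trace :=
  Complex.ext rfl (Complex.nonneg_iff.1 hP.trace_nonneg).2

theorem Matrix.PosSemidef.re_trace_pos {P : Matrix n n ℂ} (hP : P.PosSemidef) (h : P ≠ 0) :
    0 < P.trace.re := by
  refine (Complex.nonneg_iff.1 hP.trace_nonneg).1.lt_of_ne fun h0 => h ?_
  rw [← hP.trace_eq_zero_iff, ← hP.ofReal_re_trace, ← h0, Complex.ofReal_zero]

theorem Matrix.PosSemidef.inv_re_trace_smul_mem_densityMatrices {P : Matrix n n ℂ}
    (hP : P.PosSemidef) (h : P ≠ 0) : (P.trace.re)⁻¹ • P ∈ densityMatrices n := by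
  refine ⟨hP.smul (inv_nonneg.2 (hP.re_trace_pos h).le), ?_⟩
  rw [trace_smul, Complex.real_smul, Complex.ofReal_inv, hP.ofReal_re_trace,
    inv_mul_cancel₀ (hP.trace_eq_zero_iff.not.2 h)]

end DensityMatrices

def productStates (α β : Type*) [Fintype α] [Fintype β] : Set (Matrix (α × β) (α × β) ℂ) :=
  Set.image2 (· ⊗ₖ ·) (densityMatrices α) (densityMatrices β)

section Separable

variable {α β : Type*} [Fintype α] [Fintype β]

theorem isCompact_productStates : IsCompact (productStates α β) := by
  rw [productStates, ← Set.image_uncurry_prod]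
  refine (isCompact_densityMatrices.prod isCompact_densityMatrices).image ?_
  refine continuous_matrix fun i j => ?_
  exact (continuous_fst.matrix_elem i.1 j.1).mul (continuous_snd.matrix_elem i.2 j.2)

theorem productStates_subset_densityMatrices : productStates α β ⊆ densityMatrices (α × β) := by
  rintro _ ⟨P, hP, Q, hQ, rfl⟩
  exact ⟨hP.1.kronecker hQ.1, by rw [trace_kronecker, hP.2, hQ.2, one_mul]⟩

theorem kronecker_mem_sepCone {P : Matrix α α ℂ} {Q : Matrix β β ℂ} (hP : P.PosSemidef)
    (hQ : Q.PosSemidef) : P ⊗ₖ Q ∈ SepCone α β :=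
  ⟨Unit, inferInstance, fun _ => P, fun _ => Q, fun _ => hP, fun _ => hQ, by simp⟩

theorem productStates_subset_sepCone : productStates α β ⊆ SepCone α β := by
  rintro _ ⟨P, hP, Q, hQ, rfl⟩
  exact kronecker_mem_sepCone hP.1 hQ.1

theorem convex_sepCone : Convex ℝ (SepCone α β) := by
  rintro _ ⟨ι, _, P, Q, hP, hQ, rfl⟩ _ ⟨κ, _, P', Q', hP', hQ', rfl⟩ a b ha hb -
  refine ⟨ι ⊕ κ, inferInstance, Sum.elim (fun i => a • P i) (fun i => b • P' i), Sum.elim Q Q',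
    ?_, ?_, ?_⟩
  · rintro (i | i)
    exacts [(hP i).smul ha, (hP' i).smul hb]
  · rintro (i | i)
    exacts [hQ i, hQ' i]
  · simp [Fintype.sum_sum_type, Finset.smul_sum, smul_kronecker]

theorem re_trace_mul_nonneg_of_mem_sepCone {W σ : Matrix (α × β) (α × β) ℂ}
    (hW : ∀ k ∈ productStates α β, 0 ≤ (W * k).trace.re) (hσ : σ ∈ SepCone α β) :
    0 ≤ (W * σ).trace.re := by
  obtain ⟨ι, _, P, Q, hP, hQ, rfl⟩ := hσ
  rw [Matrix.mul_sum, trace_sum, Complex.re_sum]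
  refine Finset.sum_nonneg fun i _ => ?_
  rcases eq_or_ne (P i) 0 with hP0 | hP0
  · simp [hP0]
  rcases eq_or_ne (Q i) 0 with hQ0 | hQ0
  · simp [hQ0]
  set s := (P i).trace.re
  set t := (Q i).trace.re
  have hs : 0 < s := (hP i).re_trace_pos hP0
  have ht : 0 < t := (hQ i).re_trace_pos hQ0
  have hk : (s⁻¹ • P i) ⊗ₖ (t⁻¹ • Q i) ∈ productStates α β :=
    ⟨_, (hP i).inv_re_trace_smul_mem_densityMatrices hP0,
      _, (hQ i).inv_re_trace_smul_mem_densityMatrices hQ0, rfl⟩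
  have hPQ : P i ⊗ₖ Q i = (s * t) • ((s⁻¹ • P i) ⊗ₖ (t⁻¹ • Q i)) := by
    rw [smul_kronecker, kronecker_smul, smul_smul, smul_smul,
      show s * t * s⁻¹ * t⁻¹ = 1 by field_simp, one_smul]
  rw [hPQ, Matrix.mul_smul, trace_smul, Complex.smul_re, smul_eq_mul]
  exact mul_nonneg (mul_pos hs ht).le (hW _ hk)

end Separable

theorem stmt10_general {α β : Type*} [Fintype α] [Fintype β]
    (ρ : Matrix (α × β) (α × β) ℂ) (hρ : ρ.PosSemidef) (htr : ρ.trace = 1)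
    (hent : ρ ∉ SepCone α β) :
    ∃ W : Matrix (α × β) (α × β) ℂ, W.IsHermitian ∧
      (W * ρ).trace.re < 0 ∧ ∀ σ ∈ SepCone α β, 0 ≤ (W * σ).trace.re := by
  have hρ_hull : ρ ∉ convexHull ℝ (productStates α β) := fun h =>
    hent (convexHull_min productStates_subset_sepCone convex_sepCone h)
  obtain ⟨f, u, hfρ, hf⟩ := RCLike.geometric_hahn_banach_point_closed (𝕜 := ℂ)
    (convex_convexHull ℝ _) (isCompact_convexHull_of_isCompact isCompact_productStates).isClosed
    hρ_hull
  obtain ⟨W, hW, hWσ⟩ := exists_isHermitian_re_trace_mul_eq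
    ((f : Matrix (α × β) (α × β) ℂ →ₗ[ℂ] ℂ) - (u : ℂ) • traceLinearMap (α × β) ℂ ℂ)
  have hW_apply (σ : Matrix (α × β) (α × β) ℂ) (hσ : σ.IsHermitian) : (W * σ).trace.re = (f σ).re - u * σ.trace.re := by
    simp [hWσ σ hσ]
  refine ⟨W, hW, ?_, fun σ hσ => re_trace_mul_nonneg_of_mem_sepCone (fun k hk => ?_) hσ⟩
  · rw [hW_apply ρ hρ.isHermitian, htr]
    simpa using hfρ
  · obtain ⟨hk_psd, hk_tr⟩ := productStates_subset_densityMatrices hk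
    rw [hW_apply k hk_psd.isHermitian, hk_tr]
    simpa using (hf k (subset_convexHull ℝ _ hk)).le

theorem stmt10 {α β : Type*} [Fintype α] [Fintype β] [Nonempty α] [Nonempty β]
    (ρ : Matrix (α × β) (α × β) ℂ) (hρ : ρ.PosSemidef) (htr : ρ.trace = 1)
    (hent : ρ ∉ SepCone α β) :
    ∃ W : Matrix (α × β) (α × β) ℂ, W.IsHermitian ∧
      (W * ρ).trace.re < 0 ∧ ∀ σ ∈ SepCone α β, 0 ≤ (W * σ).trace.re :=
  stmt10_general ρ hρ htr hent
end

section
/- Let n be a positive natural number and let A : Fin 3 → Matrix (Fin n) (Fin n) ℂ and B : Fin 6 → Matrix (Fin n) (Fin n) ℂ be families of Hermitian matrices satisfying (A x)² = 1 and (B y)² = 1 for all x, y, and commuting across the two sides: A x * B y = B y * A x for all x, y. Then the Bowles Bell operator 𝔅 = A1*B1 + A1*B2 + A2*B1 − A2*B2 + A1*B3 + A1*B4 − A3*B3 + A3*B4 + A2*B5 + A2*B6 − A3*B5 + A3*B6 (indices 1..3, 1..6) satisfies the Tsirelson-type bound 𝔅 ⪯ (6·√2)·1, i.e. (6·√2)·1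 − 𝔅 is positive semidefinite. Hence the quantum maximum of the Bowles Bell inequality is at most 6√2. -/
/-!
The Bowles operator is the sum of three CHSH operators, `(A₁, A₂; B₁, B₂)`, `(A₁, -A₃; B₃, B₄)`
and `(A₂, -A₃; B₅, B₆)`, so it suffices to prove Tsirelson's bound `2√2` for each of them. That
follows from the sum-of-squares identity
`(√2 A₁ - B₁ - B₂)² + (√2 A₂ - B₁ + B₂)² = 2√2 (2√2 - C)`, valid for involutions with every
`Aᵢ` commuting with every `Bⱼ`, since squares of Hermitian matrices are positive semidefinite.
-/

open Matrix ComplexOrder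

def chshOperator {R : Type*} [Ring R] (A₁ A₂ B₁ B₂ : R) : R :=
  A₁ * B₁ + A₁ * B₂ + A₂ * B₁ - A₂ * B₂

theorem chshOperator_sos {R : Type*} [Ring R] [Algebra ℝ R] {A₁ A₂ B₁ B₂ : R}
    (hA₁ : A₁ * A₁ = 1) (hA₂ : A₂ * A₂ = 1) (hB₁ : B₁ * B₁ = 1) (hB₂ : B₂ * B₂ = 1)
    (h₁₁ : A₁ * B₁ = B₁ * A₁) (h₁₂ : A₁ * B₂ = B₂ * A₁)
    (h₂₁ : A₂ * B₁ = B₁ * A₂) (h₂₂ : A₂ * B₂ = B₂ * A₂) :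
    (√2 • A₁ - (B₁ + B₂)) * (√2 • A₁ - (B₁ + B₂))
      + (√2 • A₂ - (B₁ - B₂)) * (√2 • A₂ - (B₁ - B₂))
      = (2 * √2) • ((2 * √2) • 1 - chshOperator A₁ A₂ B₁ B₂) := by
  simp only [chshOperator, sub_mul, mul_sub, add_mul, mul_add, smul_mul_assoc,
    mul_smul_comm, hA₁, hA₂, hB₁, hB₂, h₁₁, h₁₂, h₂₁, h₂₂, smul_sub, smul_add, smul_smul]
  match_scalars <;> grind

theorem tsirelson_chsh {m 𝕜 : Type*} [Fintype m] [DecidableEq m] [RCLike 𝕜]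
    {A₁ A₂ B₁ B₂ : Matrix m m 𝕜}
    (hA₁herm : A₁.IsHermitian) (hA₂herm : A₂.IsHermitian) (hB₁herm : B₁.IsHermitian)
    (hB₂herm : B₂.IsHermitian)
    (hA₁ : A₁ * A₁ = 1) (hA₂ : A₂ * A₂ = 1) (hB₁ : B₁ * B₁ = 1) (hB₂ : B₂ * B₂ = 1)
    (h₁₁ : A₁ * B₁ = B₁ * A₁) (h₁₂ : A₁ * B₂ = B₂ * A₁)
    (h₂₁ : A₂ * B₁ = B₁ * A₂) (h₂₂ : A₂ * B₂ = B₂ * A₂) :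
    ((2 * √2 : ℝ) • 1 - chshOperator A₁ A₂ B₁ B₂).PosSemidef := by
  have hsq {Y : Matrix m m 𝕜} (hY : Y.IsHermitian) : (Y * Y).PosSemidef := by
    simpa only [hY.eq] using posSemidef_conjTranspose_mul_self Y
  have hsos := chshOperator_sos hA₁ hA₂ hB₁ hB₂ h₁₁ h₁₂ h₂₁ h₂₂
  have hpos : (0 : ℝ) < 2 * √2 := by positivity
  rw [← inv_smul_smul₀ hpos.ne' ((2 * √2 : ℝ) • 1 - chshOperator A₁ A₂ B₁ B₂), ← hsos]
  refine PosSemidef.smul (PosSemidef.add (hsq ?_) (hsq ?_)) (inv_nonneg.mpr hpos.le)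
  · exact ((hA₁herm.smul (IsSelfAdjoint.all _)).sub (hB₁herm.add hB₂herm))
  · exact ((hA₂herm.smul (IsSelfAdjoint.all _)).sub (hB₁herm.sub hB₂herm))

theorem stmt16_general (n : ℕ)
    (A : Fin 3 → Matrix (Fin n) (Fin n) ℂ) (B : Fin 6 → Matrix (Fin n) (Fin n) ℂ)
    (hAherm : ∀ x, (A x).IsHermitian) (hBherm : ∀ y, (B y).IsHermitian)
    (hA2 : ∀ x, A x * A x = 1) (hB2 : ∀ y, B y * B y = 1)
    (hcomm : ∀ x y, A x * B y = B y * A x) :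
    (((6 * Real.sqrt 2 : ℝ) : ℂ) • (1 : Matrix (Fin n) (Fin n) ℂ)
      - (A 0 * B 0 + A 0 * B 1 + A 1 * B 0 - A 1 * B 1
        + A 0 * B 2 + A 0 * B 3 - A 2 * B 2 + A 2 * B 3
        + A 1 * B 4 + A 1 * B 5 - A 2 * B 4 + A 2 * B 5)).PosSemidef := by
  have hA₃neg : (-A 2).IsHermitian := (hAherm 2).neg
  have hA₃neg_sq : -A 2 * -A 2 = 1 := by rw [neg_mul_neg, hA2]
  have hA₃neg_comm (y : Fin 6) : -A 2 * B y = B y * -A 2 := by rw [neg_mul, hcomm, mul_neg]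
  have block₁ := tsirelson_chsh (hAherm 0) (hAherm 1) (hBherm 0) (hBherm 1) (hA2 0) (hA2 1)
    (hB2 0) (hB2 1) (hcomm 0 0) (hcomm 0 1) (hcomm 1 0) (hcomm 1 1)
  have block₂ := tsirelson_chsh (hAherm 0) hA₃neg (hBherm 2) (hBherm 3) (hA2 0) hA₃neg_sq
    (hB2 2) (hB2 3) (hcomm 0 2) (hcomm 0 3) (hA₃neg_comm 2) (hA₃neg_comm 3)
  have block₃ := tsirelson_chsh (hAherm 1) hA₃neg (hBherm 4) (hBherm 5) (hA2 1) hA₃neg_sq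
    (hB2 4) (hB2 5) (hcomm 1 4) (hcomm 1 5) (hA₃neg_comm 4) (hA₃neg_comm 5)
  refine (congrArg Matrix.PosSemidef ?_).mp ((block₁.add block₂).add block₃)
  simp only [chshOperator, neg_mul]
  module

theorem stmt16 (n : ℕ) (hn : 0 < n)
    (A : Fin 3 → Matrix (Fin n) (Fin n) ℂ) (B : Fin 6 → Matrix (Fin n) (Fin n) ℂ)
    (hAherm : ∀ x, (A x).IsHermitian) (hBherm : ∀ y, (B y).IsHermitian)
    (hA2 : ∀ x, A x * A x = 1) (hB2 : ∀ y, B y * B y = 1)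
    (hcomm : ∀ x y, A x * B y = B y * A x) :
    (((6 * Real.sqrt 2 : ℝ) : ℂ) • (1 : Matrix (Fin n) (Fin n) ℂ)
      - (A 0 * B 0 + A 0 * B 1 + A 1 * B 0 - A 1 * B 1
        + A 0 * B 2 + A 0 * B 3 - A 2 * B 2 + A 2 * B 3
        + A 1 * B 4 + A 1 * B 5 - A 2 * B 4 + A 2 * B 5)).PosSemidef :=
  stmt16_general n A B hAherm hBherm hA2 hB2 hcomm
end

section
/- Let α, β, α', β' be finite index types. Let W : Matrix (α' × β') (α' × β') ℂ be Hermitian with re(trace(W * σ)) ≥ 0 for every σ in the separable cone over α', β'. Let ρ : Matrix (α × β) (α × β) ℂ lie in the separable cone over α, β, and for each k : Bool and j : Bool let K^{(k)} : ι_k → Matrix α' α ℂ and L^{(j)} : κ_j → Matrix β' β ℂ be finite families of Kraus operators, defining ϱ^{(k,j)} = ∑_{i,m} (K^{(k)} i ⊗ₖ L^{(j)} m) * ρ * (K^{(k)} i ⊗ₖ L^{(j)} m)ᴴ. Let W^{T(k,j)} denote W with the first factor partially transposed when k = true and the second factor partially transposed when j = true. Then ∑_{k,j : Bool} re(trace(W^{T(k,j)}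 * ϱ^{(k,j)})) ≥ 0. Consequently, a negative value of this sum certifies that the source state ρ is entangled. -/
open Matrix BigOperators ComplexOrder Kronecker

def ptKJ {α β : Type*} (k j : Bool) (M : Matrix (α × β) (α × β) ℂ) :
    Matrix (α × β) (α × β) ℂ :=
  fun p q => M (if k then q.1 else p.1, if j then q.2 else p.2)
               (if k then p.1 else q.1, if j then p.2 else q.2)

lemma kron_conjTranspose {γ δ γ' δ' : Type*} (A : Matrix γ γ' ℂ) (B : Matrix δ δ' ℂ) :
    (A ⊗ₖ B)ᴴ = Aᴴ ⊗ₖ Bᴴ := by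
  ext p q
  simp [conjTranspose_apply, mul_comm]

lemma ptKJ_sum {γ δ : Type*} {ι : Type*} (s : Finset ι)
    (k j : Bool) (f : ι → Matrix (γ × δ) (γ × δ) ℂ) :
    ptKJ k j (∑ i ∈ s, f i) = ∑ i ∈ s, ptKJ k j (f i) := by
  ext p q
  simp [ptKJ, Matrix.sum_apply]

lemma ptKJ_kron {γ δ : Type*} (k j : Bool) (P : Matrix γ γ ℂ) (Q : Matrix δ δ ℂ) :
    ptKJ k j (P ⊗ₖ Q) = (if k then Pᵀ else P) ⊗ₖ (if j then Qᵀ else Q) := by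
  ext p q
  cases k <;> cases j <;> simp [ptKJ]

lemma sep_ptKJ {γ δ : Type*} [Fintype γ] [Fintype δ] (k j : Bool)
    {σ : Matrix (γ × δ) (γ × δ) ℂ} (h : σ ∈ SepCone γ δ) :
    ptKJ k j σ ∈ SepCone γ δ := by
  obtain ⟨ι, _, P, Q, hP, hQ, rfl⟩ := h
  refine ⟨ι, ‹_›, fun i => if k then (P i)ᵀ else P i, fun i => if j then (Q i)ᵀ else Q i,
    ?_, ?_, ?_⟩
  · intro i; cases k <;> simp [(hP i).transpose, hP i]
  · intro i; cases j <;> simp [(hQ i).transpose, hQ i]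
  · rw [ptKJ_sum]
    exact Finset.sum_congr rfl fun i _ => ptKJ_kron ..

lemma sep_kraus {α β α' β' : Type*} [Fintype α] [Fintype β] [Fintype α'] [Fintype β']
    {ι κ : Type} [Fintype ι] [Fintype κ] (K : ι → Matrix α' α ℂ) (L : κ → Matrix β' β ℂ)
    {ρ : Matrix (α × β) (α × β) ℂ} (h : ρ ∈ SepCone α β) :
    (∑ i : ι, ∑ m : κ, (K i ⊗ₖ L m) * ρ * (K i ⊗ₖ L m)ᴴ) ∈ SepCone α' β' := by
  obtain ⟨τ, _, P, Q, hP, hQ, rfl⟩ := h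
  refine ⟨ι × κ × τ, inferInstance,
    fun x => K x.1 * P x.2.2 * (K x.1)ᴴ,
    fun x => L x.2.1 * Q x.2.2 * (L x.2.1)ᴴ,
    fun x => (hP _).mul_mul_conjTranspose_same _,
    fun x => (hQ _).mul_mul_conjTranspose_same _, ?_⟩
  rw [Fintype.sum_prod_type]
  refine Finset.sum_congr rfl fun i _ => ?_
  rw [Fintype.sum_prod_type]
  refine Finset.sum_congr rfl fun m _ => ?_
  rw [Matrix.mul_sum, Matrix.sum_mul]
  refine Finset.sum_congr rfl fun t _ => ?_
  rw [kron_conjTranspose, ← mul_kronecker_mul, ← mul_kronecker_mul]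

lemma trace_ptKJ_mul {γ δ : Type*} [Fintype γ] [Fintype δ] (k j : Bool)
    (A B : Matrix (γ × δ) (γ × δ) ℂ) :
    (ptKJ k j A * B).trace = (A * ptKJ k j B).trace := by
  let f : ((γ × δ) × (γ × δ)) → ((γ × δ) × (γ × δ)) := fun x =>
    (((if k then x.2.1 else x.1.1), (if j then x.2.2 else x.1.2)),
     ((if k then x.1.1 else x.2.1), (if j then x.1.2 else x.2.2)))
  have hf : Function.Involutive f := by
    intro x; cases k <;> cases j <;> simp [f]
  have h1 : (ptKJ k j A * B).trace
      = ∑ x : ((γ × δ) × (γ × δ)), ptKJ k j A x.1 x.2 * B x.2 x.1 := by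
    rw [Fintype.sum_prod_type]
    simp [Matrix.trace, Matrix.diag, Matrix.mul_apply]
  have h2 : (A * ptKJ k j B).trace
      = ∑ x : ((γ × δ) × (γ × δ)), A x.1 x.2 * ptKJ k j B x.2 x.1 := by
    rw [Fintype.sum_prod_type]
    simp [Matrix.trace, Matrix.diag, Matrix.mul_apply]
  rw [h1, h2, ← Equiv.sum_comp hf.toPerm (fun x => A x.1 x.2 * ptKJ k j B x.2 x.1)]
  refine Finset.sum_congr rfl fun x _ => ?_
  cases k <;> cases j <;> simp [ptKJ, f, Function.Involutive.toPerm]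

theorem stmt18 {α β α' β' : Type*} [Fintype α] [Fintype β] [Fintype α'] [Fintype β']
    (ι : Bool → Type) (κ : Bool → Type) [∀ k, Fintype (ι k)] [∀ j, Fintype (κ j)]
    (W : Matrix (α' × β') (α' × β') ℂ) (hW : W.IsHermitian)
    (hWsep : ∀ σ ∈ SepCone α' β', 0 ≤ (W * σ).trace.re)
    (ρ : Matrix (α × β) (α × β) ℂ) (hρ : ρ ∈ SepCone α β)
    (K : ∀ k : Bool, ι k → Matrix α' α ℂ) (L : ∀ j : Bool, κ j → Matrix β' β ℂ) :
    0 ≤ ∑ k : Bool, ∑ j : Bool,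
      (ptKJ k j W *
        (∑ i : ι k, ∑ m : κ j, (K k i ⊗ₖ L j m) * ρ * (K k i ⊗ₖ L j m)ᴴ)).trace.re := by
  refine Finset.sum_nonneg fun k _ => Finset.sum_nonneg fun j _ => ?_
  rw [trace_ptKJ_mul]
  exact hWsep _ (sep_ptKJ k j (sep_kraus (K k) (L j) hρ))
end

section
/- Let α and β be finite nonempty index types and let ψ : α × β → ℂ be a unit vector that is not a product vector, i.e. there exist no a : α → ℂ and b : β → ℂ with ψ(i,j) = a(i)·b(j) for all (i,j). Let Ψ denote the rank-one projector Ψ((i,j),(k,l)) = ψ(i,j)·conj(ψ(k,l)). Suppose ϱ : Bool × Bool → Matrix (α × β) (α × β) ℂ is a family of positive semidefinite matrices such that Ψ = ϱ(false,false) + (ϱ(false,true))^{T_B} + (ϱ(true,false))^{T_A} + (ϱ(true,true))ᵀ. Then ϱ(false,true) = 0 and ϱ(true,false) = 0, and there exists p ∈ [0,1] with ϱ(false,false) = p • Ψ and ϱ(true,true) = (1 − p) • Ψᵀ. -/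
open Matrix BigOperators ComplexOrder

/-- Partial transpose on the first tensor factor. -/
def ptA {α β : Type*} (M : Matrix (α × β) (α × β) ℂ) : Matrix (α × β) (α × β) ℂ :=
  fun p q => M (q.1, p.2) (p.1, q.2)


/-!
Partial transposition conjugates one tensor factor of a product vector, so at `a ⊗ b` the
quadratic forms of the four summands are those of the `ϱ`'s at `a ⊗ b`, `a ⊗ b̄`, `ā ⊗ b` and
`ā ⊗ b̄`. They are nonnegative and add up to `|⟨ψ, a ⊗ b⟩|²`; hence whenever `⟨ψ, a ⊗ b⟩ = 0`,
each `ϱ` annihilates its product vector. In other words `(a, b) ↦ ϱ (a ⊗ b)` is a bilinear map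
vanishing on the zero set of a form in `(a, b)` that is bilinear for the two diagonal terms and
sesquilinear for the two mixed ones. A bilinear map vanishing wherever a nonzero bilinear form
does is a multiple of it, so the diagonal terms are rank one, and being positive they are
nonnegative multiples of `Ψ` and `Ψᵀ`. A bilinear map vanishing wherever a sesquilinear form of
rank at least two does is zero, and `ψ` not being a product vector says exactly that its form has
rank at least two; so the mixed terms vanish. Comparing one diagonal entry then gives the weights
`p` and `1 - p`.
-/

namespace LinearMap

section Vanishing

variable {K A B V : Type*} [CommRing K] [AddCommGroup A] [Module K A] [AddCommGroup B]
  [Module K B] [AddCommGroup V] [Module K V] {σ : K →+* K}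
  {F : A →ₗ[K] B →ₗ[K] V} {L : A →ₗ[K] B →ₛₗ[σ] K}

theorem apply_eq_zero_of_apply_eq_one_right [RingHomSurjective σ]
    (hFL : ∀ a b, L a b = 0 → F a b = 0) {x : A} {c : B} (hc : L x c = 1) (hF : F x c = 0) :
    F x = 0 := by
  ext b
  obtain ⟨k, hk⟩ := σ.surjective (L x b)
  have hb : L x (b - k • c) = 0 := by
    rw [map_sub, map_smulₛₗ, hk, hc, smul_eq_mul, mul_one, sub_self]
  simpa [hF, sub_eq_zero] using hFL _ _ hb

theorem apply_eq_zero_of_apply_eq_one_left (hFL : ∀ a b, L a b = 0 → F a b = 0)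
    {c : A} {y : B} (hc : L c y = 1) (hF : F c y = 0) (a : A) : F a y = 0 := by
  have ha : L (a - L a y • c) y = 0 := by
    rw [map_sub, map_smul, sub_apply, smul_apply, hc, smul_eq_mul, mul_one, sub_self]
  simpa [hF, sub_eq_zero] using hFL _ _ ha

theorem eq_zero_of_vanishing [RingHomSurjective σ] (hFL : ∀ a b, L a b = 0 → F a b = 0)
    {a₁ : A} {b₁ : B} (h₁ : L a₁ b₁ = 1) (hF : F a₁ b₁ = 0) : F = 0 := by
  ext a : 1
  -- shifting `a` by a multiple of `a₁` normalises it against `b₁` and, as `F a₁ = 0`, keeps `F a`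
  have hx : L (a + (1 - L a b₁) • a₁) b₁ = 1 := by simp [h₁]
  have := apply_eq_zero_of_apply_eq_one_right hFL hx (by
    simp [apply_eq_zero_of_apply_eq_one_left hFL h₁ hF])
  rwa [map_add, map_smul, apply_eq_zero_of_apply_eq_one_right hFL h₁ hF, smul_zero,
    add_zero] at this

theorem apply_eq_apply_of_dual (hFL : ∀ a b, L a b = 0 → F a b = 0) {x y : A} {c₁ c₂ : B}
    (h₁₁ : L x c₁ = 1) (h₁₂ : L x c₂ = 0) (h₂₁ : L y c₁ = 0) (h₂₂ : L y c₂ = 1) :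
    F x c₁ = F y c₂ := by
  have h : L (x + y) (c₁ - c₂) = 0 := by simp [h₁₁, h₁₂, h₂₁, h₂₂]
  have := hFL _ _ h
  simp only [map_add, map_sub, add_apply, hFL _ _ h₁₂, hFL _ _ h₂₁] at this
  rwa [add_zero, zero_add, sub_eq_zero] at this

end Vanishing

theorem eq_smul_of_vanishing {K A B V : Type*} [CommRing K] [AddCommGroup A] [Module K A]
    [AddCommGroup B] [Module K B] [AddCommGroup V] [Module K V] {F : A →ₗ[K] B →ₗ[K] V}
    {L : A →ₗ[K] B →ₗ[K] K} (hFL : ∀ a b, L a b = 0 → F a b = 0) {a₁ : A} {b₁ : B}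
    (h₁ : L a₁ b₁ = 1) (a : A) (b : B) : F a b = L a b • F a₁ b₁ := by
  set G := F - L.compr₂ (toSpanSingleton K V (F a₁ b₁))
  have hG : ∀ a b, G a b = F a b - L a b • F a₁ b₁ := fun _ _ => rfl
  have hG₀ : G = 0 := eq_zero_of_vanishing (L := L)
    (fun a b h => by rw [hG, hFL a b h, h, zero_smul, sub_zero]) h₁
    (by rw [hG, h₁, one_smul, sub_self])
  rw [← sub_eq_zero, ← hG, hG₀, zero_apply, zero_apply]

theorem eq_zero_of_vanishing_of_dual {A B V : Type*} [AddCommGroup A] [Module ℂ A]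
    [AddCommGroup B] [Module ℂ B] [AddCommGroup V] [Module ℂ V] {F : A →ₗ[ℂ] B →ₗ[ℂ] V}
    {L : A →ₗ[ℂ] B →ₗ⋆[ℂ] ℂ} (hFL : ∀ a b, L a b = 0 → F a b = 0) {a₁ a₂ : A} {b₁ b₂ : B}
    (h₁₁ : L a₁ b₁ = 1) (h₁₂ : L a₁ b₂ = 0) (h₂₁ : L a₂ b₁ = 0) (h₂₂ : L a₂ b₂ = 1) :
    F = 0 := by
  have e := apply_eq_apply_of_dual hFL h₁₁ h₁₂ h₂₁ h₂₂
  -- `(I • a₂, I • b₂)` is again dual to `(a₁, b₁)`, but `F` picks up the factor `I * I = -1`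
  have e' := apply_eq_apply_of_dual hFL (y := Complex.I • a₂) (c₂ := Complex.I • b₂) h₁₁
    (by simp [h₁₂]) (by simp [h₂₁]) (by simp [h₂₂])
  rw [map_smul, map_smul, smul_apply, smul_smul, Complex.I_mul_I, neg_one_smul, ← e] at e'
  refine eq_zero_of_vanishing hFL h₁₁ ((smul_eq_zero.mp ?_).resolve_left (two_ne_zero (α := ℂ)))
  rw [two_smul]
  nth_rw 1 [e']
  exact neg_add_cancel _

theorem exists_dual_of_det_ne_zero {K A B : Type*} [Field K] [AddCommGroup A] [Module K A]
    [AddCommGroup B] [Module K B] {L : A →ₗ[K] B →ₗ[K] K} {x₁ x₂ : A} {y₁ y₂ : B}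
    (hD : L x₁ y₁ * L x₂ y₂ - L x₁ y₂ * L x₂ y₁ ≠ 0) :
    ∃ b₁ b₂ : B, L x₁ b₁ = 1 ∧ L x₁ b₂ = 0 ∧ L x₂ b₁ = 0 ∧ L x₂ b₂ = 1 := by
  -- Cramer's rule for the 2 × 2 matrix `(L xᵢ yⱼ)`
  set D := L x₁ y₁ * L x₂ y₂ - L x₁ y₂ * L x₂ y₁
  refine ⟨D⁻¹ • (L x₂ y₂ • y₁ - L x₂ y₁ • y₂), D⁻¹ • (L x₁ y₁ • y₂ - L x₁ y₂ • y₁),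
    ?_, ?_, ?_, ?_⟩ <;>
  simp only [map_smul, map_sub, smul_eq_mul] <;> field_simp <;> ring

end LinearMap

section ProductVectors

variable {R : Type*} [CommSemiring R] {α β : Type*}

def prodVec : (α → R) →ₗ[R] (β → R) →ₗ[R] (α × β → R) :=
  LinearMap.mk₂ R (fun a b p => a p.1 * b p.2)
    (fun _ _ _ => by ext; simp [add_mul]) (fun _ _ _ => by ext; simp [mul_assoc])
    (fun _ _ _ => by ext; simp [mul_add]) (fun _ _ _ => by ext; simp [mul_left_comm])

@[simp]
theorem prodVec_apply (a : α → R) (b : β → R) (p : α × β) : prodVec a b p = a p.1 * b p.2 :=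
  rfl

def prodForm [Fintype α] [Fintype β] (c : α × β → R) : (α → R) →ₗ[R] (β → R) →ₗ[R] R :=
  prodVec.compr₂ (dotProductBilin R R c)

theorem prodForm_apply [Fintype α] [Fintype β] (c : α × β → R) (a : α → R) (b : β → R) :
    prodForm c a b = c ⬝ᵥ prodVec a b :=
  rfl

def IsProductVec (c : α × β → R) : Prop :=
  ∃ (a : α → R) (b : β → R), ∀ i j, c (i, j) = a i * b j

theorem prodVec_single [DecidableEq α] [DecidableEq β] (i : α) (j : β) :
    prodVec (Pi.single i 1) (Pi.single j 1) = (Pi.single (i, j) 1 : α × β → R) := by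
  ext ⟨k, l⟩
  by_cases hk : k = i <;> by_cases hl : l = j <;> simp [hk, hl]

theorem prodForm_single [Fintype α] [Fintype β] [DecidableEq α] [DecidableEq β]
    (c : α × β → R) (i : α) (j : β) : prodForm c (Pi.single i 1) (Pi.single j 1) = c (i, j) := by
  rw [prodForm_apply, prodVec_single, dotProduct_single_one]

theorem Matrix.ext_of_mulVec_prodVec [Fintype α] [Fintype β] {m : Type*}
    {M N : Matrix m (α × β) R} (h : ∀ a b, M *ᵥ prodVec a b = N *ᵥ prodVec a b) : M = N := by
  classical
  exact ext_of_mulVec_single fun ⟨i, j⟩ => by rw [← prodVec_single, h]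

variable [StarRing R]

theorem star_prodVec (a : α → R) (b : β → R) :
    star (prodVec a b) = prodVec (star a) (star b) := by
  ext p
  simp

theorem star_prodForm [Fintype α] [Fintype β] (c : α × β → R) (a : α → R) (b : β → R) :
    star (prodForm c a b) = prodForm (star c) (star a) (star b) := by
  rw [prodForm_apply, prodForm_apply, ← star_prodVec, star_dotProduct_star, dotProduct_comm]

theorem IsProductVec.star {c : α × β → R} (hc : IsProductVec c) : IsProductVec (star c) := by
  obtain ⟨a, b, h⟩ := hc
  exact ⟨Star.star a, Star.star b, fun i j => by simp [h]⟩

theorem dotProduct_mulVec_eq_sum {n : Type*} [Fintype n] (M : Matrix n n R) (u : n → R) :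
    star u ⬝ᵥ M *ᵥ u = ∑ x : n × n, star (u x.1) * M x.1 x.2 * u x.2 := by
  simp [dotProduct, mulVec, Fintype.sum_prod_type, Finset.mul_sum, mul_assoc]

end ProductVectors

section FieldCoefficients

variable {K : Type*} [Field K] {α β : Type*}

theorem exists_minor_ne_zero_of_not_isProductVec {c : α × β → K} (hc : ¬ IsProductVec c) :
    ∃ i k j l, c (i, j) * c (k, l) - c (i, l) * c (k, j) ≠ 0 := by
  by_contra! h
  obtain ⟨⟨k, l⟩, hkl⟩ : ∃ q, c q ≠ 0 := by
    by_contra! h₀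
    exact hc ⟨0, 0, by simp [h₀]⟩
  refine hc ⟨fun i => c (i, l) / c (k, l), fun j => c (k, j), fun i j => ?_⟩
  field_simp
  linear_combination h i k j l

variable [Fintype α] [Fintype β]

theorem exists_prodForm_eq_one {c : α × β → K} (hc : c ≠ 0) :
    ∃ (a : α → K) (b : β → K), prodForm c a b = 1 := by
  classical
  obtain ⟨⟨i, j⟩, hij⟩ := Function.ne_iff.mp hc
  exact ⟨(c (i, j))⁻¹ • Pi.single i 1, Pi.single j 1, by
    rw [map_smul, LinearMap.smul_apply, prodForm_single, smul_eq_mul, inv_mul_cancel₀ hij]⟩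

theorem exists_prodForm_dual_of_not_isProductVec {c : α × β → K} (hc : ¬ IsProductVec c) :
    ∃ (a₁ a₂ : α → K) (b₁ b₂ : β → K), prodForm c a₁ b₁ = 1 ∧ prodForm c a₁ b₂ = 0 ∧
      prodForm c a₂ b₁ = 0 ∧ prodForm c a₂ b₂ = 1 := by
  classical
  obtain ⟨i, k, j, l, hD⟩ := exists_minor_ne_zero_of_not_isProductVec hc
  obtain ⟨b₁, b₂, h⟩ := LinearMap.exists_dual_of_det_ne_zero (L := prodForm c)
    (x₁ := Pi.single i 1) (x₂ := Pi.single k 1) (y₁ := Pi.single j 1) (y₂ := Pi.single l 1)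
    (by simpa only [prodForm_single] using hD)
  exact ⟨_, _, b₁, b₂, h⟩

end FieldCoefficients

namespace Matrix

variable {m α β : Type*} [Fintype α] [Fintype β] {c : α × β → ℂ} {ρ : Matrix m (α × β) ℂ}

theorem eq_zero_of_mulVec_prodVec_star_right (hc : ¬ IsProductVec c)
    (h : ∀ a b, prodForm c a (star b) = 0 → ρ *ᵥ prodVec a b = 0) : ρ = 0 := by
  obtain ⟨a₁, a₂, b₁, b₂, h₁₁, h₁₂, h₂₁, h₂₂⟩ := exists_prodForm_dual_of_not_isProductVec hc
  set L : (α → ℂ) →ₗ[ℂ] (β → ℂ) →ₗ⋆[ℂ] ℂ :=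
    (prodForm c).compl₂ (starLinearEquiv ℂ).toLinearMap
  have hL : ∀ a b, L a b = prodForm c a (star b) := fun _ _ => rfl
  have hF := LinearMap.eq_zero_of_vanishing_of_dual (F := prodVec.compr₂ ρ.mulVecLin) (L := L)
    (b₁ := star b₁) (b₂ := star b₂) (fun a b hab => h a b (hL a b ▸ hab))
    (by rwa [hL, star_star]) (by rwa [hL, star_star]) (by rwa [hL, star_star])
    (by rwa [hL, star_star])
  exact ext_of_mulVec_prodVec fun a b => by simpa using congr($hF a b)

theorem eq_zero_of_mulVec_prodVec_star_left (hc : ¬ IsProductVec c)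
    (h : ∀ a b, prodForm c (star a) b = 0 → ρ *ᵥ prodVec a b = 0) : ρ = 0 := by
  obtain ⟨a₁, a₂, b₁, b₂, h₁₁, h₁₂, h₂₁, h₂₂⟩ := exists_prodForm_dual_of_not_isProductVec hc
  set L : (β → ℂ) →ₗ[ℂ] (α → ℂ) →ₗ⋆[ℂ] ℂ :=
    (prodForm c).flip.compl₂ (starLinearEquiv ℂ).toLinearMap
  have hL : ∀ b a, L b a = prodForm c (star a) b := fun _ _ => rfl
  have hF := LinearMap.eq_zero_of_vanishing_of_dual (F := (prodVec.compr₂ ρ.mulVecLin).flip)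
    (L := L) (a₁ := b₁) (a₂ := b₂) (b₁ := star a₁) (b₂ := star a₂)
    (fun b a hab => by simpa using h a b (hL b a ▸ hab))
    (by rwa [hL, star_star]) (by rwa [hL, star_star]) (by rwa [hL, star_star])
    (by rwa [hL, star_star])
  exact ext_of_mulVec_prodVec fun a b => by simpa using congr($hF b a)

theorem exists_eq_vecMulVec_of_mulVec_prodVec (hc : c ≠ 0)
    (h : ∀ a b, prodForm c a b = 0 → ρ *ᵥ prodVec a b = 0) : ∃ w, ρ = vecMulVec w c := by
  obtain ⟨a₁, b₁, h₁⟩ := exists_prodForm_eq_one hc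
  refine ⟨ρ *ᵥ prodVec a₁ b₁, ext_of_mulVec_prodVec fun a b => ?_⟩
  rw [vecMulVec_mulVec, op_smul_eq_smul, ← prodForm_apply]
  exact LinearMap.eq_smul_of_vanishing (F := prodVec.compr₂ ρ.mulVecLin) h h₁ a b

theorem PosSemidef.exists_eq_smul_vecMulVec {n : Type*} [Fintype n] {v w : n → ℂ}
    (hv : v ≠ 0) (hM : (vecMulVec w (star v)).PosSemidef) :
    ∃ r : ℝ, 0 ≤ r ∧ vecMulVec w (star v) = (r : ℂ) • vecMulVec v (star v) := by
  obtain ⟨q, hq⟩ : ∃ q, v q ≠ 0 := Function.ne_iff.mp hv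
  have hw : w = (star (w q) / star (v q)) • v := by
    ext p
    have := hM.isHermitian.apply p q
    simp only [vecMulVec_apply, star_mul', star_star, Pi.star_apply] at this
    rw [Pi.smul_apply, smul_eq_mul, div_mul_eq_mul_div, eq_div_iff (star_ne_zero.mpr hq), ← this,
      mul_comm]
  set k := star (w q) / star (v q)
  have hk : 0 ≤ k := by
    have hdiag := hM.diag_nonneg (i := q)
    rw [hw, smul_vecMulVec, smul_apply, vecMulVec_apply, smul_eq_mul, Pi.star_apply,
      Complex.star_def, Complex.mul_conj] at hdiag
    have hr : 0 < Complex.normSq (v q) := Complex.normSq_pos.mpr hq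
    simpa [hr.ne', mul_assoc] using
      mul_nonneg hdiag (Complex.zero_le_real.mpr (inv_nonneg.mpr hr.le))
  refine ⟨k.re, (Complex.nonneg_iff.mp hk).1, ?_⟩
  rw [← Complex.eq_re_of_ofReal_le (r := 0) (by simpa using hk), hw, smul_vecMulVec]

theorem PosSemidef.exists_eq_smul_vecMulVec_of_mulVec_prodVec {v : α × β → ℂ}
    {ρ : Matrix (α × β) (α × β) ℂ} (hρ : ρ.PosSemidef) (hv : v ≠ 0)
    (h : ∀ a b, prodForm (star v) a b = 0 → ρ *ᵥ prodVec a b = 0) :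
    ∃ r : ℝ, 0 ≤ r ∧ ρ = (r : ℂ) • vecMulVec v (star v) := by
  obtain ⟨w, rfl⟩ := exists_eq_vecMulVec_of_mulVec_prodVec (star_ne_zero.mpr hv) h
  exact hρ.exists_eq_smul_vecMulVec hv

end Matrix

@[simp] theorem ptA_zero {α β : Type*} : ptA (0 : Matrix (α × β) (α × β) ℂ) = 0 := rfl

@[simp] theorem ptB_zero {α β : Type*} : ptB (0 : Matrix (α × β) (α × β) ℂ) = 0 := rfl

section PartialTranspose

variable {α β : Type*} [Fintype α] [Fintype β]

theorem dotProduct_ptB_mulVec_prodVec (M : Matrix (α × β) (α × β) ℂ) (a : α → ℂ) (b : β → ℂ) :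
    star (prodVec a b) ⬝ᵥ ptB M *ᵥ prodVec a b =
      star (prodVec a (star b)) ⬝ᵥ M *ᵥ prodVec a (star b) := by
  rw [dotProduct_mulVec_eq_sum, dotProduct_mulVec_eq_sum]
  refine Fintype.sum_bijective (fun x : (α × β) × (α × β) => ((x.1.1, x.2.2), (x.2.1, x.1.2)))
    (Function.Involutive.bijective fun _ => rfl) _ _ ?_
  rintro ⟨⟨i, j⟩, ⟨k, l⟩⟩
  simp [ptB]
  ring

theorem dotProduct_ptA_mulVec_prodVec (M : Matrix (α × β) (α × β) ℂ) (a : α → ℂ) (b : β → ℂ) :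
    star (prodVec a b) ⬝ᵥ ptA M *ᵥ prodVec a b =
      star (prodVec (star a) b) ⬝ᵥ M *ᵥ prodVec (star a) b := by
  rw [dotProduct_mulVec_eq_sum, dotProduct_mulVec_eq_sum]
  refine Fintype.sum_bijective (fun x : (α × β) × (α × β) => ((x.2.1, x.1.2), (x.1.1, x.2.2)))
    (Function.Involutive.bijective fun _ => rfl) _ _ ?_
  rintro ⟨⟨i, j⟩, ⟨k, l⟩⟩
  simp [ptA]
  ring

theorem dotProduct_transpose_mulVec_prodVec (M : Matrix (α × β) (α × β) ℂ) (a : α → ℂ)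
    (b : β → ℂ) : star (prodVec a b) ⬝ᵥ Mᵀ *ᵥ prodVec a b =
      star (prodVec (star a) (star b)) ⬝ᵥ M *ᵥ prodVec (star a) (star b) := by
  rw [Matrix.dotProduct_transpose_mulVec, star_prodVec, star_prodVec, star_star, star_star]

theorem mulVec_prodVec_eq_zero_of_decomposition {ψ : α × β → ℂ}
    {ρ₀₀ ρ₀₁ ρ₁₀ ρ₁₁ : Matrix (α × β) (α × β) ℂ} (h₀₀ : ρ₀₀.PosSemidef) (h₀₁ : ρ₀₁.PosSemidef)
    (h₁₀ : ρ₁₀.PosSemidef) (h₁₁ : ρ₁₁.PosSemidef)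
    (hsum : vecMulVec ψ (star ψ) = ρ₀₀ + ptB ρ₀₁ + ptA ρ₁₀ + ρ₁₁ᵀ) {a : α → ℂ} {b : β → ℂ}
    (hab : prodForm (star ψ) a b = 0) :
    ρ₀₀ *ᵥ prodVec a b = 0 ∧ ρ₀₁ *ᵥ prodVec a (star b) = 0 ∧
      ρ₁₀ *ᵥ prodVec (star a) b = 0 ∧ ρ₁₁ *ᵥ prodVec (star a) (star b) = 0 := by
  have h : star (prodVec a b) ⬝ᵥ vecMulVec ψ (star ψ) *ᵥ prodVec a b = 0 := by
    rw [vecMulVec_mulVec, ← prodForm_apply, hab]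
    simp
  have n₀₀ := h₀₀.dotProduct_mulVec_nonneg (prodVec a b)
  have n₀₁ := h₀₁.dotProduct_mulVec_nonneg (prodVec a (star b))
  have n₁₀ := h₁₀.dotProduct_mulVec_nonneg (prodVec (star a) b)
  have n₁₁ := h₁₁.dotProduct_mulVec_nonneg (prodVec (star a) (star b))
  rw [hsum, add_mulVec, add_mulVec, add_mulVec, dotProduct_add, dotProduct_add, dotProduct_add,
    dotProduct_ptB_mulVec_prodVec, dotProduct_ptA_mulVec_prodVec,
    dotProduct_transpose_mulVec_prodVec,
    add_eq_zero_iff_of_nonneg (add_nonneg (add_nonneg n₀₀ n₀₁) n₁₀) n₁₁,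
    add_eq_zero_iff_of_nonneg (add_nonneg n₀₀ n₀₁) n₁₀, add_eq_zero_iff_of_nonneg n₀₀ n₀₁] at h
  obtain ⟨⟨⟨z₀₀, z₀₁⟩, z₁₀⟩, z₁₁⟩ := h
  exact ⟨(h₀₀.dotProduct_mulVec_zero_iff _).mp z₀₀, (h₀₁.dotProduct_mulVec_zero_iff _).mp z₀₁,
    (h₁₀.dotProduct_mulVec_zero_iff _).mp z₁₀, (h₁₁.dotProduct_mulVec_zero_iff _).mp z₁₁⟩

end PartialTranspose

theorem stmt19_general {α β : Type*} [Fintype α] [Fintype β]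
    (ψ : α × β → ℂ)
    (hnp : ¬ ∃ (a : α → ℂ) (b : β → ℂ), ∀ i j, ψ (i, j) = a i * b j)
    (Ψ : Matrix (α × β) (α × β) ℂ)
    (hΨ : ∀ p q, Ψ p q = ψ p * (starRingEnd ℂ) (ψ q))
    (ϱ : Bool × Bool → Matrix (α × β) (α × β) ℂ)
    (hpsd : ∀ kj, (ϱ kj).PosSemidef)
    (hsum : Ψ = ϱ (false, false) + ptB (ϱ (false, true)) + ptA (ϱ (true, false))
                  + (ϱ (true, true))ᵀ) :
    ϱ (false, true) = 0 ∧ ϱ (true, false) = 0 ∧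
    ∃ p : ℝ, 0 ≤ p ∧ p ≤ 1 ∧
      ϱ (false, false) = ((p : ℝ) : ℂ) • Ψ ∧
      ϱ (true, true) = (((1 - p : ℝ)) : ℂ) • Ψᵀ := by
  obtain rfl : Ψ = vecMulVec ψ (star ψ) := ext hΨ
  have hψ : ψ ≠ 0 := fun h => hnp ⟨0, 0, by simp [h]⟩
  have hnp' : ¬ IsProductVec (star ψ) := fun h => hnp (star_star ψ ▸ h.star)
  have hker := fun a b => mulVec_prodVec_eq_zero_of_decomposition (hpsd _) (hpsd _) (hpsd _)
    (hpsd _) hsum (a := a) (b := b)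
  have h₀₁ : ϱ (false, true) = 0 :=
    eq_zero_of_mulVec_prodVec_star_right hnp' fun a b h => by simpa using (hker a _ h).2.1
  have h₁₀ : ϱ (true, false) = 0 :=
    eq_zero_of_mulVec_prodVec_star_left hnp' fun a b h => by simpa using (hker _ b h).2.2.1
  obtain ⟨p, hp, hρ₀₀⟩ := (hpsd (false, false)).exists_eq_smul_vecMulVec_of_mulVec_prodVec hψ
    fun a b h => (hker a b h).1
  obtain ⟨q, hq, hρ₁₁⟩ := (hpsd (true, true)).exists_eq_smul_vecMulVec_of_mulVec_prodVec
    (star_ne_zero.mpr hψ) fun a b h => by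
      rw [star_star] at h
      simpa using (hker (star a) (star b) (by rw [← star_prodForm, h, star_zero])).2.2.2
  rw [star_star, ← transpose_vecMulVec] at hρ₁₁
  have hpq : p + q = 1 := by
    rw [h₀₁, h₁₀, hρ₀₀, hρ₁₁, ptB_zero, ptA_zero, add_zero, add_zero, transpose_smul,
      transpose_transpose, ← add_smul, eq_comm] at hsum
    exact_mod_cast smul_left_injective ℂ (vecMulVec_ne_zero hψ (star_ne_zero.mpr hψ))
      (hsum.trans (one_smul ℂ _).symm)
  refine ⟨h₀₁, h₁₀, p, hp, by linarith, hρ₀₀, ?_⟩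
  rw [hρ₁₁, show 1 - p = q by linarith]

theorem stmt19 {α β : Type*} [Fintype α] [Fintype β] [Nonempty α] [Nonempty β]
    (ψ : α × β → ℂ) (hψnorm : ∑ p, Complex.normSq (ψ p) = 1)
    (hnp : ¬ ∃ (a : α → ℂ) (b : β → ℂ), ∀ i j, ψ (i, j) = a i * b j)
    (Ψ : Matrix (α × β) (α × β) ℂ)
    (hΨ : ∀ p q, Ψ p q = ψ p * (starRingEnd ℂ) (ψ q))
    (ϱ : Bool × Bool → Matrix (α × β) (α × β) ℂ)
    (hpsd : ∀ kj, (ϱ kj).PosSemidef)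
    (hsum : Ψ = ϱ (false, false) + ptB (ϱ (false, true)) + ptA (ϱ (true, false))
                  + (ϱ (true, true))ᵀ) :
    ϱ (false, true) = 0 ∧ ϱ (true, false) = 0 ∧
    ∃ p : ℝ, 0 ≤ p ∧ p ≤ 1 ∧
      ϱ (false, false) = ((p : ℝ) : ℂ) • Ψ ∧
      ϱ (true, true) = (((1 - p : ℝ)) : ℂ) • Ψᵀ :=
  stmt19_general ψ hnp Ψ hΨ ϱ hpsd hsum
end
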